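/- arXiv:2603.25116 — 12 statements merged into one kernel-verified Lean document; each statement's English description precedes it below -/
import Mathlib

section
/- For every real number α with 0 < α < 1/2, one has (1/(2π)) ∫₀^{2π} (2 sin(φ/2))^{−2α} dφ = Γ(1 − 2α) / Γ(1 − α)². -/
/-!
With `θ = φ / 2` and `t = (1 - cos θ) / 2`, which maps `(0, π)` increasingly onto `(0, 1)`, one
has `t (1 - t) = (sin θ / 2)²` and `dt = (sin θ / 2) dθ`, so `∫₀^π (2 sin θ)^s dθ` is
`4^s B((s+1)/2, (s+1)/2) = 4^s Γ((s+1)/2)² / Γ(s+1)`. Legendre's duplication formula rewrites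
this as `π Γ(s+1) / Γ(s/2+1)²`, and `s = -2α` gives the claim.
-/

open MeasureTheory Set Real

theorem integral_Ioo_rpow_mul_one_sub_rpow {u v : ℝ} (hu : 0 < u) (hv : 0 < v) :
    ∫ t in Ioo (0:ℝ) 1, t ^ (u - 1) * (1 - t) ^ (v - 1) =
      Gamma u * Gamma v / Gamma (u + v) := by
  apply Complex.ofReal_injective
  have h := Complex.betaIntegral_eq_Gamma_mul_div u v (by simpa) (by simpa)
  rw [Complex.betaIntegral, intervalIntegral.integral_of_le zero_le_one,
    integral_Ioc_eq_integral_Ioo] at h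
  push_cast [← Complex.Gamma_ofReal]
  rw [← h, ← integral_complex_ofReal]
  refine setIntegral_congr_fun measurableSet_Ioo fun t ht => ?_
  push_cast [Complex.ofReal_cpow ht.1.le, Complex.ofReal_cpow (sub_nonneg.2 ht.2.le)]
  rfl

theorem integral_Ioo_zero_one_eq_integral_sin_smul {E : Type*} [NormedAddCommGroup E]
    [NormedSpace ℝ E] (g : ℝ → E) :
    ∫ t in Ioo (0:ℝ) 1, g t = ∫ θ in Ioo 0 π, (sin θ / 2) • g ((1 - cos θ) / 2) := by
  set f : ℝ → ℝ := fun θ => (1 - cos θ) / 2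
  have hmono : StrictMonoOn f (Icc 0 π) := fun a ha b hb hab => by
    simp only [f]; linarith [strictAntiOn_cos ha hb hab]
  have himage : f '' Ioo 0 π = Ioo 0 1 := by
    rw [ContinuousOn.image_Ioo_of_strictMonoOn pi_pos.le (by fun_prop) hmono]
    norm_num [f]
  have hderiv : ∀ θ ∈ Ioo 0 π, HasDerivWithinAt f (sin θ / 2) (Ioo 0 π) θ := fun θ _ => by
    simpa using (((hasDerivAt_cos θ).const_sub 1).div_const 2).hasDerivWithinAt
  rw [← himage, integral_image_eq_integral_abs_deriv_smul measurableSet_Ioo hderiv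
    (hmono.injOn.mono Ioo_subset_Icc_self)]
  refine setIntegral_congr_fun measurableSet_Ioo fun θ hθ => ?_
  rw [abs_of_pos (by linarith [sin_pos_of_pos_of_lt_pi hθ.1 hθ.2])]

theorem two_mul_sin_rpow_eq_of_mem_Ioo {θ : ℝ} (hθ : θ ∈ Ioo 0 π) (s : ℝ) :
    (2 * sin θ) ^ s = (sin θ / 2) * (4 ^ s *
      (((1 - cos θ) / 2) ^ ((s + 1) / 2 - 1) * (1 - (1 - cos θ) / 2) ^ ((s + 1) / 2 - 1))) := by
  have hsin : 0 < sin θ := sin_pos_of_pos_of_lt_pi hθ.1 hθ.2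
  have hprod : (1 - cos θ) / 2 * (1 - (1 - cos θ) / 2) = (sin θ / 2) ^ 2 := by
    linear_combination (-1/4 : ℝ) * sin_sq_add_cos_sq θ
  rw [← mul_rpow (by linarith [cos_le_one θ]) (by linarith [neg_one_le_cos θ]), hprod,
    ← rpow_natCast, ← rpow_mul (by positivity),
    show ((2 : ℕ) : ℝ) * ((s + 1) / 2 - 1) = s - 1 by ring, rpow_sub_one (by positivity),
    show 2 * sin θ = 4 * (sin θ / 2) by ring,
    mul_rpow (by norm_num) (by positivity)]
  field_simp

theorem Gamma_add_one_div_two_sq {s : ℝ} (hs : -1 < s) :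
    Gamma ((s + 1) / 2) ^ 2 = π * Gamma (s + 1) ^ 2 / (4 ^ s * Gamma (s / 2 + 1) ^ 2) := by
  have hdup := Gamma_mul_Gamma_add_half ((s + 1) / 2)
  rw [show (s + 1) / 2 + 1 / 2 = s / 2 + 1 by ring, show 2 * ((s + 1) / 2) = s + 1 by ring,
    show 1 - (s + 1) = -s by ring] at hdup
  have hG : Gamma (s / 2 + 1) ≠ 0 := (Gamma_pos_of_pos (by linarith)).ne'
  have h4 : ((2 : ℝ) ^ (-s)) ^ 2 = (4 ^ s)⁻¹ := by
    rw [rpow_neg zero_le_two, inv_pow, show (4 : ℝ) = 2 * 2 by norm_num,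
      mul_rpow zero_le_two zero_le_two, sq]
  rw [eq_div_of_mul_eq hG hdup, div_pow, mul_pow, mul_pow, sq_sqrt pi_pos.le, h4]
  field_simp

theorem integral_Ioo_two_mul_sin_rpow {s : ℝ} (hs : -1 < s) :
    ∫ θ in Ioo 0 π, (2 * sin θ) ^ s = π * Gamma (s + 1) / Gamma (s / 2 + 1) ^ 2 := by
  have ha : 0 < (s + 1) / 2 := by linarith
  have hsubst := integral_Ioo_zero_one_eq_integral_sin_smul
    (fun t => 4 ^ s * (t ^ ((s + 1) / 2 - 1) * (1 - t) ^ ((s + 1) / 2 - 1)))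
  simp only [smul_eq_mul] at hsubst
  rw [setIntegral_congr_fun measurableSet_Ioo fun θ hθ => two_mul_sin_rpow_eq_of_mem_Ioo hθ s,
    ← hsubst, integral_const_mul, integral_Ioo_rpow_mul_one_sub_rpow ha ha, add_halves,
    mul_div_assoc', ← sq, Gamma_add_one_div_two_sq hs]
  have hG : Gamma (s + 1) ≠ 0 := (Gamma_pos_of_pos (by linarith)).ne'
  field_simp

theorem integral_two_mul_sin_half_rpow {s : ℝ} (hs : -1 < s) :
    ∫ φ in (0:ℝ)..(2 * π), (2 * sin (φ / 2)) ^ s =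
      2 * π * Gamma (s + 1) / Gamma (s / 2 + 1) ^ 2 := by
  rw [intervalIntegral.integral_comp_div (fun θ => (2 * sin θ) ^ s) two_ne_zero,
    zero_div, mul_div_cancel_left₀ π two_ne_zero, intervalIntegral.integral_of_le pi_pos.le,
    integral_Ioc_eq_integral_Ioo, integral_Ioo_two_mul_sin_rpow hs, smul_eq_mul]
  ring

theorem stmt0_general (α : ℝ) (h1 : α < 1 / 2) :
    (1 / (2 * Real.pi)) *
        ∫ φ in (0:ℝ)..(2 * Real.pi), (2 * Real.sin (φ / 2)) ^ (-(2 * α)) =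
      Real.Gamma (1 - 2 * α) / Real.Gamma (1 - α) ^ 2 := by
  rw [integral_two_mul_sin_half_rpow (by linarith), show -(2 * α) + 1 = 1 - 2 * α by ring,
    show -(2 * α) / 2 + 1 = 1 - α by ring]
  field_simp

/-- Lemma B.2 (Normalization integral): for `0 < α < 1/2`,
`(1/(2π)) ∫₀^{2π} (2 sin(φ/2))^{-2α} dφ = Γ(1-2α)/Γ(1-α)²`. -/
theorem stmt0 (α : ℝ) (h0 : 0 < α) (h1 : α < 1 / 2) :
    (1 / (2 * Real.pi)) *
        ∫ φ in (0:ℝ)..(2 * Real.pi), (2 * Real.sin (φ / 2)) ^ (-(2 * α)) =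
      Real.Gamma (1 - 2 * α) / Real.Gamma (1 - α) ^ 2 :=
  stmt0_general α h1
end

section
/- The series ∑_{m=1}^∞ H_{m−1}/m³ converges and equals (1/4) ζ(4). -/
/-- `ζ(s) = ∑_{n≥1} n^{-s}` for real `s`. -/
noncomputable def zetaR (s : ℝ) : ℝ := ∑' n : ℕ, 1 / ((n : ℝ) + 1) ^ s

/-- `H_M = ∑_{k=1}^M 1/k`, with `H_0 = 0`. -/
noncomputable def harmonicR (M : ℕ) : ℝ := ∑ k ∈ Finset.range M, 1 / ((k : ℝ) + 1)

/-!
Expand `ζ(2)² = ∑_{x, y ≥ 1} 1 / (x² y²)` in two ways. Splitting the pairs into `x = y`, `x < y`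
and `x > y` gives `ζ(2)² = ζ(4) + 2 ζ(2, 2)`, where `ζ(2, 2) = ∑_{m < n} 1 / (m² n²)`. Writing
`1 / (x² y²) = (1/x + 1/y)² / (x + y)²` and `1 / (x y) = (1/x + 1/y) / (x + y)` and substituting
`m = x`, `n = x + y` gives `ζ(2)² = 2 ζ(2, 2) + 4 ζ(3, 1)`. Hence
`ζ(3, 1) = ∑_{m < n} 1 / (m n³) = ζ(4) / 4`, and summing over `m` first turns `ζ(3, 1)` into
`∑_n H_{n-1} / n³`.
-/

open Finset Function

section

variable {α : Type*} [AddCommMonoid α] [TopologicalSpace α]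

lemma HasSum.prod_symm {β γ : Type*} {f : β × γ → α} {a : α} (h : HasSum f a) :
    HasSum (fun p : γ × β => f p.swap) a :=
  (Equiv.prodComm _ _).hasSum_iff.2 h

theorem HasSum.indicator_range {β γ : Type*} {f : β → α} {g : γ → β} {a : α}
    (hg : Injective g) (h : HasSum (f ∘ g) a) : HasSum ((Set.range g).indicator f) a :=
  hasSum_subtype_iff_indicator.1 (hg.hasSum_range_iff.2 h)

lemma mem_range_upper_triangle_iff (p : ℕ × ℕ) :
    p ∈ Set.range (fun q : ℕ × ℕ => (q.1, q.1 + q.2 + 1)) ↔ p.1 < p.2 := by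
  refine ⟨?_, fun h => ⟨(p.1, p.2 - p.1 - 1), ?_⟩⟩
  · rintro ⟨q, rfl⟩
    dsimp only
    omega
  · exact Prod.ext rfl (by dsimp only; omega)

lemma mem_range_lower_triangle_iff (p : ℕ × ℕ) :
    p ∈ Set.range (fun q : ℕ × ℕ => (q.1 + q.2 + 1, q.1)) ↔ p.2 < p.1 := by
  refine ⟨?_, fun h => ⟨(p.2, p.1 - p.2 - 1), ?_⟩⟩
  · rintro ⟨q, rfl⟩
    dsimp only
    omega
  · exact Prod.ext (by dsimp only; omega) rfl

theorem HasSum.of_diag_of_triangles [ContinuousAdd α] {f : ℕ × ℕ → α} {d u l : α}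
    (hd : HasSum (fun n => f (n, n)) d)
    (hu : HasSum (fun q : ℕ × ℕ => f (q.1, q.1 + q.2 + 1)) u)
    (hl : HasSum (fun q : ℕ × ℕ => f (q.1 + q.2 + 1, q.1)) l) :
    HasSum f (d + u + l) := by
  have hup : Injective (fun q : ℕ × ℕ => (q.1, q.1 + q.2 + 1)) := by
    rintro ⟨a, b⟩ ⟨c, d⟩ h
    simp only [Prod.mk.injEq] at h ⊢
    omega
  have hlow : Injective (fun q : ℕ × ℕ => (q.1 + q.2 + 1, q.1)) := by
    rintro ⟨a, b⟩ ⟨c, d⟩ h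
    simp only [Prod.mk.injEq] at h ⊢
    omega
  have hd' := HasSum.indicator_range (f := f) (g := Function.diag) Function.diag_injective hd
  have hu' := HasSum.indicator_range (f := f) hup hu
  have hl' := HasSum.indicator_range (f := f) hlow hl
  refine ((hd'.add hu').add hl').congr_fun fun p => ?_
  simp only [Set.indicator, Set.range_diag, Set.mem_diagonal_iff, mem_range_upper_triangle_iff,
    mem_range_lower_triangle_iff]
  rcases lt_trichotomy p.1 p.2 with h | h | h
  · simp [h, h.ne, h.not_gt]
  · simp [h]
  · simp [h, h.ne', h.not_gt]

theorem HasSum.sum_antidiagonal [ContinuousAdd α] [RegularSpace α] {f : ℕ × ℕ → α} {a : α}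
    (h : HasSum f a) : HasSum (fun n => ∑ kl ∈ antidiagonal n, f kl) a :=
  (HasAntidiagonal.sigmaAntidiagonalEquivProd.hasSum_iff.2 h).sigma fun n =>
    (Finset.sum_coe_sort (antidiagonal n) f) ▸ hasSum_fintype _

end

lemma hasSum_zetaR_natCast {p : ℕ} (hp : 1 < p) :
    HasSum (fun n : ℕ => 1 / ((n : ℝ) + 1) ^ p) (zetaR p) := by
  have hs : Summable (fun n : ℕ => 1 / ((n : ℝ) + 1) ^ p) := by
    simpa using (summable_nat_add_iff 1).2 (Real.summable_one_div_nat_pow.2 hp)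
  simpa [zetaR, Real.rpow_natCast] using hs.hasSum

lemma hasSum_zetaR_two_mul_self :
    HasSum (fun p : ℕ × ℕ => 1 / ((p.1 : ℝ) + 1) ^ 2 * (1 / ((p.2 : ℝ) + 1) ^ 2))
      (zetaR 2 * zetaR 2) := by
  have h : HasSum (fun n : ℕ => 1 / ((n : ℝ) + 1) ^ 2) (zetaR 2) := by
    simpa using hasSum_zetaR_natCast one_lt_two
  have hnonneg : 0 ≤ fun n : ℕ => 1 / ((n : ℝ) + 1) ^ 2 := fun n => by dsimp only; positivity
  exact h.mul h (h.summable.mul_of_nonneg h.summable hnonneg hnonneg :)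

/-- The term `1 / (m ^ s * n ^ t)` with `m = a + 1 < n = a + k + 2` at `(a, k)`, so that
`∑' p, doubleZetaTerm s t p` is the double zeta value `ζ(t, s) = ∑_{m < n} 1 / (m ^ s * n ^ t)`. -/
noncomputable def doubleZetaTerm (s t : ℕ) (p : ℕ × ℕ) : ℝ :=
  1 / (((p.1 : ℝ) + 1) ^ s * ((p.1 : ℝ) + p.2 + 2) ^ t)

lemma doubleZetaTerm_nonneg (s t : ℕ) (p : ℕ × ℕ) : 0 ≤ doubleZetaTerm s t p := by
  unfold doubleZetaTerm
  positivity

lemma one_div_sq_mul_one_div_sq_eq (p : ℕ × ℕ) :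
    1 / ((p.1 : ℝ) + 1) ^ 2 * (1 / ((p.2 : ℝ) + 1) ^ 2) =
      doubleZetaTerm 2 2 p + doubleZetaTerm 2 2 p.swap +
        2 * (doubleZetaTerm 1 3 p + doubleZetaTerm 1 3 p.swap) := by
  unfold doubleZetaTerm
  simp only [Prod.fst_swap, Prod.snd_swap]
  field_simp
  ring

lemma summable_doubleZetaTerm_two_two : Summable (doubleZetaTerm 2 2) :=
  hasSum_zetaR_two_mul_self.summable.of_nonneg_of_le (doubleZetaTerm_nonneg 2 2) fun p => by
    linarith [one_div_sq_mul_one_div_sq_eq p, doubleZetaTerm_nonneg 2 2 p.swap,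
      doubleZetaTerm_nonneg 1 3 p, doubleZetaTerm_nonneg 1 3 p.swap]

lemma summable_doubleZetaTerm_one_three : Summable (doubleZetaTerm 1 3) :=
  hasSum_zetaR_two_mul_self.summable.of_nonneg_of_le (doubleZetaTerm_nonneg 1 3) fun p => by
    linarith [one_div_sq_mul_one_div_sq_eq p, doubleZetaTerm_nonneg 2 2 p,
      doubleZetaTerm_nonneg 2 2 p.swap, doubleZetaTerm_nonneg 1 3 p,
      doubleZetaTerm_nonneg 1 3 p.swap]

lemma zetaR_two_mul_self_eq_doubleZeta :
    zetaR 2 * zetaR 2 = 2 * ∑' p, doubleZetaTerm 2 2 p + 4 * ∑' p, doubleZetaTerm 1 3 p := by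
  have h22 := summable_doubleZetaTerm_two_two.hasSum
  have h13 := summable_doubleZetaTerm_one_three.hasSum
  have h := ((h22.add h22.prod_symm).add ((h13.add h13.prod_symm).mul_left 2))
  refine hasSum_zetaR_two_mul_self.unique (h.congr_fun one_div_sq_mul_one_div_sq_eq) |>.trans ?_
  ring

lemma zetaR_two_mul_self_eq_zetaR_four_add :
    zetaR 2 * zetaR 2 = zetaR 4 + 2 * ∑' p, doubleZetaTerm 2 2 p := by
  have hdiag :
      HasSum (fun n : ℕ => 1 / ((n : ℝ) + 1) ^ 2 * (1 / ((n : ℝ) + 1) ^ 2)) (zetaR 4) := by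
    refine (hasSum_zetaR_natCast (p := 4) (by norm_num)).congr_fun fun n => ?_
    rw [one_div_mul_one_div, ← pow_add]
  have hupper (q : ℕ × ℕ) :
      1 / ((q.1 : ℝ) + 1) ^ 2 * (1 / (((q.1 + q.2 + 1 : ℕ) : ℝ) + 1) ^ 2) =
        doubleZetaTerm 2 2 q := by
    rw [doubleZetaTerm, one_div_mul_one_div]
    push_cast
    ring
  have h22 := summable_doubleZetaTerm_two_two.hasSum
  have h := HasSum.of_diag_of_triangles
    (f := fun p : ℕ × ℕ => 1 / ((p.1 : ℝ) + 1) ^ 2 * (1 / ((p.2 : ℝ) + 1) ^ 2))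
    hdiag (h22.congr_fun hupper) (h22.congr_fun fun q => (mul_comm _ _).trans (hupper q))
  refine hasSum_zetaR_two_mul_self.unique h |>.trans ?_
  ring

lemma sum_antidiagonal_doubleZetaTerm_one_three (n : ℕ) :
    ∑ kl ∈ antidiagonal n, doubleZetaTerm 1 3 kl = harmonicR (n + 1) / ((n : ℝ) + 2) ^ 3 := by
  rw [harmonicR, Finset.sum_div, Finset.Nat.sum_antidiagonal_eq_sum_range_succ_mk]
  refine Finset.sum_congr rfl fun k hk => ?_
  have hn : (k : ℝ) + ((n - k : ℕ) : ℝ) + 2 = n + 2 := by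
    rw [Nat.cast_sub (Nat.lt_succ_iff.1 (Finset.mem_range.1 hk))]
    ring
  rw [doubleZetaTerm]
  dsimp only
  rw [hn, pow_one, div_div]

lemma hasSum_harmonicR_div_cube :
    HasSum (fun m : ℕ => harmonicR m / ((m : ℝ) + 1) ^ 3) (∑' p, doubleZetaTerm 1 3 p) := by
  have h := summable_doubleZetaTerm_one_three.hasSum.sum_antidiagonal
  simp only [sum_antidiagonal_doubleZetaTerm_one_three] at h
  rw [← hasSum_nat_add_iff' 1]
  simpa [harmonicR, add_assoc, one_add_one_eq_two] using h

/-- Euler sum: `∑_{m≥1} H_{m-1}/m³ = ζ(4)/4`. -/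
theorem stmt2 :
    HasSum (fun m : ℕ => harmonicR m / ((m : ℝ) + 1) ^ 3) (zetaR 4 / 4) := by
  convert hasSum_harmonicR_div_cube using 1
  linarith [zetaR_two_mul_self_eq_doubleZeta, zetaR_two_mul_self_eq_zetaR_four_add]
end

section
/- The series ∑_{m=1}^∞ H_{m−1}/m⁴ converges and equals 2 ζ(5) − ζ(2) ζ(3). -/
/-!
Write `T(r, s, t) = ∑_{j, k ≥ 1} 1 / (j ^ r k ^ s (j + k) ^ t)` (Tornheim's double sums) and
`S = ∑_{n ≥ 1} H_{n-1} / n ^ 4`. Splitting `1 = (j + k) / (j + k)` three times gives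
`T(3,1,1) = T(1,0,4) + T(0,1,4) + T(2,0,3) + T(3,0,2)`. Summing over `n = j + k` first shows
`T(1,0,4) = S`, and `T(0,1,4) = T(1,0,4)` by symmetry. Summing over `k` first, the inner sum
`∑_k 1 / (k (j + k)) = H_j / j` telescopes, so `T(3,1,1) = ∑_j H_j / j ^ 4 = S + ζ(5)`. Finally,
splitting `ζ(2) ζ(3) = ∑_{j,n} 1 / (j ^ 2 n ^ 3)` according to `j < n`, `j = n` or `j > n` gives
`ζ(2) ζ(3) = T(2,0,3) + ζ(5) + T(3,0,2)`. Hence `S + ζ(5) = 2 S + ζ(2) ζ(3) - ζ(5)`.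
-/

open Finset Filter Function Topology

theorem hasSum_sub_add_of_antitone {x : ℕ → ℝ} (hx : Antitone x)
    (hlim : Tendsto x atTop (𝓝 0)) (j : ℕ) :
    HasSum (fun b => x b - x (b + j)) (∑ i ∈ range j, x i) := by
  have partial_sum (B : ℕ) : ∑ b ∈ range B, (x b - x (b + j))
      = ∑ i ∈ range j, x i - ∑ i ∈ range j, x (B + i) := by
    have h₁ := sum_range_add x B j
    have h₂ := sum_range_add x j B
    rw [add_comm j B] at h₂
    simp only [add_comm j] at h₂
    rw [sum_sub_distrib]
    linarith
  rw [hasSum_iff_tendsto_nat_of_nonneg fun b => sub_nonneg.2 (hx (Nat.le_add_right b j))]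
  simp_rw [partial_sum]
  have htail : Tendsto (fun B => ∑ i ∈ range j, x (B + i)) atTop (𝓝 0) := by
    simpa using tendsto_finsetSum (range j) fun i _ => hlim.comp (tendsto_add_atTop_nat i)
  simpa using htail.const_sub (∑ i ∈ range j, x i)

theorem harmonicR_succ (m : ℕ) : harmonicR (m + 1) = harmonicR m + 1 / ((m : ℝ) + 1) :=
  sum_range_succ _ m

theorem hasSum_harmonicR_div (a : ℕ) :
    HasSum (fun b : ℕ => 1 / (((b : ℝ) + 1) * ((a : ℝ) + b + 2)))
      (harmonicR (a + 1) / ((a : ℝ) + 1)) := by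
  have hx : Antitone fun b : ℕ => 1 / ((b : ℝ) + 1) := fun m n h =>
    one_div_le_one_div_of_le (by positivity) (by gcongr)
  refine ((hasSum_sub_add_of_antitone hx tendsto_one_div_add_atTop_nhds_zero_nat
    (a + 1)).div_const ((a : ℝ) + 1)).congr_fun fun b => ?_
  push_cast
  field_simp
  ring

theorem hasSum_zetaR (s : ℕ) (hs : 2 ≤ s) :
    HasSum (fun n : ℕ => 1 / ((n : ℝ) + 1) ^ s) (zetaR s) := by
  have hsum : Summable fun n : ℕ => 1 / ((n : ℝ) + 1) ^ s := by
    simpa using (summable_nat_add_iff 1).mpr (Real.summable_one_div_nat_pow.mpr hs)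
  simpa only [zetaR, Real.rpow_natCast] using hsum.hasSum

section Triangle

variable {α : Type*} [AddCommMonoid α] [TopologicalSpace α]

theorem hasSum_comp_iff_indicator_range {β γ : Type*} {f : β → α} {e : γ → β}
    (he : Injective e) {a : α} :
    HasSum (f ∘ e) a ↔ HasSum ((Set.range e).indicator f) a :=
  he.hasSum_range_iff.symm.trans hasSum_subtype_iff_indicator

theorem upper_injective : Injective fun q : ℕ × ℕ => (q.1, q.1 + q.2 + 1) := by
  intro q q' h
  simp only [Prod.mk.injEq] at h
  ext <;> omega

theorem lower_injective : Injective fun q : ℕ × ℕ => (q.1 + q.2 + 1, q.1) := by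
  intro q q' h
  simp only [Prod.mk.injEq] at h
  ext <;> omega

theorem range_upper : Set.range (fun q : ℕ × ℕ => (q.1, q.1 + q.2 + 1)) = {p | p.1 < p.2} := by
  ext ⟨i, j⟩
  simp only [Set.mem_range, Set.mem_ofPred_eq, Prod.mk.injEq, Prod.exists]
  exact ⟨by omega, fun h => ⟨i, j - i - 1, rfl, by omega⟩⟩

theorem range_lower : Set.range (fun q : ℕ × ℕ => (q.1 + q.2 + 1, q.1)) = {p | p.2 < p.1} := by
  ext ⟨i, j⟩
  simp only [Set.mem_range, Set.mem_ofPred_eq, Prod.mk.injEq, Prod.exists]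
  exact ⟨by omega, fun h => ⟨j, i - j - 1, by omega, rfl⟩⟩

theorem range_diag : Set.range (fun d : ℕ => (d, d)) = {p : ℕ × ℕ | p.1 = p.2} := by
  ext ⟨i, j⟩
  simp only [Set.mem_range, Set.mem_ofPred_eq, Prod.mk.injEq]
  exact ⟨fun ⟨d, h₁, h₂⟩ => h₁ ▸ h₂, fun h => ⟨i, rfl, h⟩⟩

theorem hasSum_upper_iff {f : ℕ × ℕ → α} {a : α} :
    HasSum (fun q : ℕ × ℕ => f (q.1, q.1 + q.2 + 1)) a ↔ HasSum ({p | p.1 < p.2}.indicator f) a :=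
  range_upper ▸ hasSum_comp_iff_indicator_range upper_injective

theorem hasSum_lower_iff {f : ℕ × ℕ → α} {a : α} :
    HasSum (fun q : ℕ × ℕ => f (q.1 + q.2 + 1, q.1)) a ↔ HasSum ({p | p.2 < p.1}.indicator f) a :=
  range_lower ▸ hasSum_comp_iff_indicator_range lower_injective

theorem hasSum_diag_iff {f : ℕ × ℕ → α} {a : α} :
    HasSum (fun d : ℕ => f (d, d)) a ↔ HasSum ({p | p.1 = p.2}.indicator f) a :=
  range_diag ▸ hasSum_comp_iff_indicator_range fun _ _ h => congrArg Prod.fst h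

end Triangle

theorem tsum_eq_upper_add_diag_add_lower {E : Type*} [NormedAddCommGroup E] [CompleteSpace E]
    {f : ℕ × ℕ → E} (hf : Summable f) :
    ∑' p, f p = ∑' q : ℕ × ℕ, f (q.1, q.1 + q.2 + 1) + ∑' d, f (d, d)
      + ∑' q : ℕ × ℕ, f (q.1 + q.2 + 1, q.1) := by
  have hU := hasSum_upper_iff.1 (hf.comp_injective upper_injective).hasSum
  have hD := hasSum_diag_iff.1 (hf.comp_injective fun _ _ h => congrArg Prod.fst h).hasSum
  have hL := hasSum_lower_iff.1 (hf.comp_injective lower_injective).hasSum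
  refine hf.hasSum.unique (((hU.add hD).add hL).congr_fun fun p => ?_)
  simp only [Set.indicator_apply, Set.mem_ofPred_eq]
  rcases lt_trichotomy p.1 p.2 with h | h | h
  · simp [h, h.ne, h.not_gt]
  · simp [h]
  · simp [h, h.ne', h.not_gt]

/-- The pair `(a, b)` stands for `(j, k) = (a + 1, b + 1)`, so that `a + b + 2 = j + k`. -/
noncomputable def tornheimTerm (r s t : ℕ) (p : ℕ × ℕ) : ℝ :=
  1 / (((p.1 : ℝ) + 1) ^ r * ((p.2 : ℝ) + 1) ^ s * ((p.1 : ℝ) + p.2 + 2) ^ t)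

theorem tornheimTerm_swap (r s t : ℕ) (p : ℕ × ℕ) :
    tornheimTerm r s t p.swap = tornheimTerm s r t p := by
  simp only [tornheimTerm, Prod.fst_swap, Prod.snd_swap]
  ring

theorem tornheimTerm_succ_succ (r s t : ℕ) (p : ℕ × ℕ) :
    tornheimTerm (r + 1) (s + 1) t p
      = tornheimTerm r (s + 1) (t + 1) p + tornheimTerm (r + 1) s (t + 1) p := by
  simp only [tornheimTerm]
  field_simp
  ring

theorem tornheimTerm_three_one_one (p : ℕ × ℕ) :
    tornheimTerm 3 1 1 p = tornheimTerm 1 0 4 p + tornheimTerm 0 1 4 p + tornheimTerm 2 0 3 p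
      + tornheimTerm 3 0 2 p := by
  rw [tornheimTerm_succ_succ 2 0 1, tornheimTerm_succ_succ 1 0 2, tornheimTerm_succ_succ 0 0 3]
  ring

theorem summable_tornheimTerm {r s t : ℕ} (hr : 2 ≤ r + t) (hs : 2 ≤ s + t)
    (hrst : 4 ≤ r + s + t) : Summable (tornheimTerm r s t) := by
  -- split `(j + k) ^ t ≥ j ^ t₁ k ^ t₂` so as to compare with `1 / (j ^ 2 k ^ 2)`
  obtain ⟨t₁, t₂, rfl, hr₁, hs₂⟩ : ∃ t₁ t₂, t = t₁ + t₂ ∧ 2 ≤ r + t₁ ∧ 2 ≤ s + t₂ :=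
    ⟨min t (2 - r), t - min t (2 - r), by omega, by omega, by omega⟩
  refine Summable.of_nonneg_of_le (fun p => by unfold tornheimTerm; positivity) (fun ⟨a, b⟩ => ?_)
    ((hasSum_zetaR 2 le_rfl).summable.mul_of_nonneg (hasSum_zetaR 2 le_rfl).summable
      (fun _ => by positivity) fun _ => by positivity)
  simp only [tornheimTerm, one_div_mul_one_div]
  refine one_div_le_one_div_of_le (by positivity) ?_
  have ha : (1 : ℝ) ≤ a + 1 := by simp
  have hb : (1 : ℝ) ≤ b + 1 := by simp
  calc ((a : ℝ) + 1) ^ 2 * ((b : ℝ) + 1) ^ 2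
      ≤ ((a : ℝ) + 1) ^ (r + t₁) * ((b : ℝ) + 1) ^ (s + t₂) := by
        gcongr
    _ = ((a : ℝ) + 1) ^ r * ((b : ℝ) + 1) ^ s * (((a : ℝ) + 1) ^ t₁ * ((b : ℝ) + 1) ^ t₂) := by
        ring
    _ ≤ ((a : ℝ) + 1) ^ r * ((b : ℝ) + 1) ^ s * ((a : ℝ) + b + 2) ^ (t₁ + t₂) := by
        rw [pow_add]
        gcongr <;> linarith

theorem tsum_tornheimTerm_comm (r s t : ℕ) :
    ∑' p, tornheimTerm r s t p = ∑' p, tornheimTerm s r t p := by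
  rw [← (Equiv.prodComm ℕ ℕ).tsum_eq]
  exact tsum_congr fun p => tornheimTerm_swap r s t p

theorem tsum_tornheimTerm_three_one_one :
    ∑' p, tornheimTerm 3 1 1 p = ∑' p, tornheimTerm 1 0 4 p + ∑' p, tornheimTerm 0 1 4 p
      + ∑' p, tornheimTerm 2 0 3 p + ∑' p, tornheimTerm 3 0 2 p := by
  have hsum {r s t : ℕ} (hr : 2 ≤ r + t) (hs : 2 ≤ s + t) (hrst : 4 ≤ r + s + t) :=
    (summable_tornheimTerm hr hs hrst).hasSum
  exact ((((hsum (by norm_num) (by norm_num) (by norm_num)).add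
    (hsum (by norm_num) (by norm_num) (by norm_num))).add
    (hsum (by norm_num) (by norm_num) (by norm_num))).add
    (hsum (by norm_num) (by norm_num) (by norm_num))).congr_fun tornheimTerm_three_one_one
    |>.tsum_eq

theorem hasSum_harmonicR_div_pow_four :
    HasSum (fun m : ℕ => harmonicR m / ((m : ℝ) + 1) ^ 4) (∑' p, tornheimTerm 1 0 4 p) := by
  set f : ℕ × ℕ → ℝ := fun p => 1 / (((p.2 : ℝ) + 1) * ((p.1 : ℝ) + 1) ^ 4)
  have hf : HasSum ({p | p.2 < p.1}.indicator f) (∑' p, tornheimTerm 1 0 4 p) := by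
    refine hasSum_lower_iff.1 <| (summable_tornheimTerm (by norm_num) (by norm_num)
      (by norm_num)).hasSum.congr_fun fun q => ?_
    simp only [f, tornheimTerm]
    push_cast
    ring
  refine hf.prod_fiberwise fun m => ?_
  have hfiber : harmonicR m / ((m : ℝ) + 1) ^ 4
      = ∑ k ∈ range m, {p : ℕ × ℕ | p.2 < p.1}.indicator f (m, k) := by
    simp only [harmonicR, sum_div, div_div]
    refine sum_congr rfl fun k hk => ?_
    rw [Set.indicator_of_mem (show (m, k) ∈ {p : ℕ × ℕ | p.2 < p.1} from mem_range.1 hk)]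
  rw [hfiber]
  exact hasSum_sum_of_ne_finset_zero (L := SummationFilter.unconditional ℕ) fun k hk =>
    Set.indicator_of_notMem (by simpa using hk) f

theorem tsum_tornheimTerm_three_one_one_eq_add_zetaR :
    ∑' p, tornheimTerm 3 1 1 p = ∑' p, tornheimTerm 1 0 4 p + zetaR 5 := by
  have hfibers : HasSum (fun a : ℕ => harmonicR (a + 1) / ((a : ℝ) + 1) ^ 4)
      (∑' p, tornheimTerm 3 1 1 p) := by
    refine (summable_tornheimTerm (by norm_num) (by norm_num) (by norm_num)).hasSum.prod_fiberwise
      fun a => ?_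
    have hval : 1 / ((a : ℝ) + 1) ^ 3 * (harmonicR (a + 1) / ((a : ℝ) + 1))
        = harmonicR (a + 1) / ((a : ℝ) + 1) ^ 4 := by
      field_simp
    refine hval ▸ ((hasSum_harmonicR_div a).mul_left _).congr_fun fun b => ?_
    rw [one_div_mul_one_div, tornheimTerm]
    ring
  have hsplit : HasSum (fun a : ℕ => harmonicR (a + 1) / ((a : ℝ) + 1) ^ 4)
      (∑' p, tornheimTerm 1 0 4 p + zetaR 5) := by
    refine (hasSum_harmonicR_div_pow_four.add (hasSum_zetaR 5 (by norm_num))).congr_fun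
      fun a => ?_
    rw [harmonicR_succ]
    field_simp
  exact hfibers.unique hsplit

theorem zetaR_two_mul_zetaR_three :
    zetaR 2 * zetaR 3 = ∑' p, tornheimTerm 2 0 3 p + zetaR 5 + ∑' p, tornheimTerm 3 0 2 p := by
  have h₂ := hasSum_zetaR 2 le_rfl
  have h₃ := hasSum_zetaR 3 (by norm_num)
  have h₅ := hasSum_zetaR 5 (by norm_num)
  simp only [Nat.cast_ofNat] at h₂ h₃ h₅
  have hprod := h₂.summable.mul_of_nonneg h₃.summable (fun _ => by positivity)
    fun _ => by positivity
  rw [← h₂.tsum_eq, ← h₃.tsum_eq, ← h₅.tsum_eq, h₂.summable.tsum_mul_tsum h₃.summable hprod,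
    tsum_eq_upper_add_diag_add_lower hprod]
  congr 1
  · congr 1
    · refine tsum_congr fun q => ?_
      rw [one_div_mul_one_div, tornheimTerm]
      push_cast
      ring
    · refine tsum_congr fun d => ?_
      rw [one_div_mul_one_div]
      ring
  · refine tsum_congr fun q => ?_
    rw [one_div_mul_one_div, tornheimTerm]
    push_cast
    ring

/-- Euler sum: `∑_{m≥1} H_{m-1}/m⁴ = 2ζ(5) − ζ(2)ζ(3)`. -/
theorem stmt3 :
    HasSum (fun m : ℕ => harmonicR m / ((m : ℝ) + 1) ^ 4)
      (2 * zetaR 5 - zetaR 2 * zetaR 3) := by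
  convert hasSum_harmonicR_div_pow_four using 1
  linarith [tsum_tornheimTerm_three_one_one, tsum_tornheimTerm_comm 0 1 4,
    tsum_tornheimTerm_three_one_one_eq_add_zetaR, zetaR_two_mul_zetaR_three]
end

section
/- The double series ∑ 1/(m² ℓ² |m − ℓ|), taken over all pairs of nonzero integers m, ℓ with m ≠ ℓ, converges absolutely and equals 8 ζ(2) ζ(3) − 12 ζ(5). -/
open Function Set ENNReal

namespace ZS

/-- shifted coordinate -/
def x (n : ℕ) : ℝ := (n : ℝ) + 1

lemma x_pos (n : ℕ) : 0 < x n := by unfold x; positivity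
lemma x_ne (n : ℕ) : x n ≠ 0 := (x_pos n).ne'
lemma one_le_x (n : ℕ) : 1 ≤ x n := by simp [x]
lemma x_add (m j : ℕ) : x (m + j + 1) = x m + x j := by simp [x]; ring

/-- tsum over a sum type in ℝ≥0∞ -/
lemma tsum_sum_type {α β : Type*} (f : α ⊕ β → ℝ≥0∞) :
    ∑' z, f z = ∑' a, f (.inl a) + ∑' b, f (.inr b) := by
  have h : ∀ z : α ⊕ β, f z = (fun z => if z.isLeft then f z else 0) z
      + (fun z => if z.isRight then f z else 0) z := by
    rintro (a | b) <;> simp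
  rw [tsum_congr h, ENNReal.tsum_add]
  congr 1
  · refine (tsum_eq_tsum_of_ne_zero_bij (fun a => Sum.inl a.1) ?_ ?_ ?_)
    · intro a b hab; exact Subtype.ext (by simpa using hab)
    · rintro (a | b) h
      · exact ⟨⟨a, by simpa using h⟩, rfl⟩
      · simp at h
    · intro a; simp
  · refine (tsum_eq_tsum_of_ne_zero_bij (fun b => Sum.inr b.1) ?_ ?_ ?_)
    · intro a b hab; exact Subtype.ext (by simpa using hab)
    · rintro (a | b) h
      · simp at h
      · exact ⟨⟨b, by simpa using h⟩, rfl⟩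
    · intro b; simp


/-- reindex a tsum along an injection whose complement misses the support -/
lemma tsum_inj {γ δ : Type*} {g : γ → δ} (hg : Injective g) (f : δ → ℝ≥0∞)
    (h0 : ∀ d, d ∉ Set.range g → f d = 0) : ∑' c, f (g c) = ∑' d, f d := by
  refine (tsum_eq_tsum_of_ne_zero_bij (fun c => g c.1) ?_ ?_ ?_).symm
  · intro a b hab; exact Subtype.ext (hg (by simpa using hab))
  · intro d hd
    rcases not_imp_comm.mp (h0 d) hd with ⟨c, rfl⟩
    exact ⟨⟨c, hd⟩, rfl⟩
  · intro c; rfl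

/-- three-way split of a double sum over ℕ × ℕ -/
lemma tsum_split3 (F : ℕ × ℕ → ℝ≥0∞) :
    ∑' p, F p = ∑' p : ℕ × ℕ, F (p.1 + p.2 + 1, p.2) + ∑' p : ℕ × ℕ, F (p.2, p.1 + p.2 + 1)
      + ∑' n : ℕ, F (n, n) := by
  classical
  set e : (ℕ × ℕ) ⊕ ((ℕ × ℕ) ⊕ ℕ) → ℕ × ℕ :=
    Sum.elim (fun p => (p.1 + p.2 + 1, p.2)) (Sum.elim (fun p => (p.2, p.1 + p.2 + 1)) fun n => (n, n))
    with he
  have hbij : Bijective e := by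
    constructor
    · rintro (⟨a, b⟩ | ⟨a, b⟩ | a) (⟨c, d⟩ | ⟨c, d⟩ | c) h <;>
        simp only [he, Sum.elim_inl, Sum.elim_inr, Prod.mk.injEq] at h <;>
        simp_all <;> omega
    · rintro ⟨a, b⟩
      rcases lt_trichotomy a b with h | h | h
      · exact ⟨.inr (.inl (b - a - 1, a)), by simp [he]; omega⟩
      · exact ⟨.inr (.inr a), by simp [he, h]⟩
      · exact ⟨.inl (a - b - 1, b), by simp [he]; omega⟩
  have := (Equiv.ofBijective e hbij).tsum_eq F
  rw [← this, tsum_sum_type, tsum_sum_type]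
  simp only [Equiv.ofBijective_apply, he, Sum.elim_inl, Sum.elim_inr, add_assoc]


open Filter in
lemma tele (k : ℕ) : HasSum (fun m : ℕ => 1 / x (m + k) - 1 / x (m + k + 1)) (1 / x k) := by
  have hnn : ∀ m : ℕ, 0 ≤ 1 / x (m + k) - 1 / x (m + k + 1) := by
    intro m
    have h1 : x (m + k) ≤ x (m + k + 1) := by simp [x]
    have := one_div_le_one_div_of_le (x_pos (m + k)) h1
    linarith
  rw [hasSum_iff_tendsto_nat_of_nonneg hnn]
  have hps : ∀ n : ℕ, ∑ m ∈ Finset.range n, (1 / x (m + k) - 1 / x (m + k + 1))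
      = 1 / x k - 1 / x (n + k) := by
    intro n
    have := Finset.sum_range_sub' (fun i => 1 / x (i + k)) n
    rw [Nat.zero_add] at this
    rw [← this]
    exact Finset.sum_congr rfl fun i _ => by rw [Nat.add_right_comm]
  simp only [hps]
  have h0 : Tendsto (fun n : ℕ => 1 / x (n + k)) atTop (nhds 0) :=
    tendsto_one_div_add_atTop_nhds_zero_nat.comp (tendsto_add_atTop_nat k) |>.congr
      (fun n => by simp [x, Function.comp])
  simpa using (h0.const_sub (1 / x k))

lemma cut (k : ℕ) : HasSum (fun m : ℕ => 1 / x m - 1 / x (m + k))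
    (∑ i ∈ Finset.range k, 1 / x i) := by
  induction k with
  | zero => simpa using hasSum_zero
  | succ k ih =>
      have h := ih.add (tele k)
      have hfun : (fun m : ℕ => 1 / x m - 1 / x (m + (k + 1)))
          = fun m => (1 / x m - 1 / x (m + k)) + (1 / x (m + k) - 1 / x (m + k + 1)) :=
        funext fun m => by rw [← Nat.add_assoc]; ring
      rw [Finset.sum_range_succ, hfun]
      exact h

lemma inner_harm (j : ℕ) :
    HasSum (fun m : ℕ => 1 / (x j ^ 3 * (x m * (x m + x j))))
      ((∑ i ∈ Finset.range (j + 1), 1 / x i) / x j ^ 4) := by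
  have h := (cut (j + 1)).div_const (x j ^ 4)
  have hfun : (fun m : ℕ => 1 / (x j ^ 3 * (x m * (x m + x j))))
      = fun m => (1 / x m - 1 / x (m + (j + 1))) / x j ^ 4 := funext fun m => ?_
  · rw [hfun]; exact h
  rw [show m + (j + 1) = m + j + 1 from (Nat.add_assoc m j 1).symm, x_add]
  have h1 : x m ≠ 0 := x_ne m
  have h2 : x j ≠ 0 := x_ne j
  have h3 : x m + x j ≠ 0 := by have := x_pos m; have := x_pos j; positivity
  field_simp
  ring


noncomputable section

/-- real zeta value -/
def zr (a : ℕ) : ℝ := ∑' n : ℕ, 1 / x n ^ a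

def zq (a : ℕ) : ℝ≥0∞ := ∑' n : ℕ, ENNReal.ofReal (1 / x n ^ a)

def Zq (a b : ℕ) : ℝ≥0∞ :=
  ∑' p : ℕ × ℕ, ENNReal.ofReal (1 / ((x p.1 + x p.2) ^ a * x p.2 ^ b))

def Tq (a b c : ℕ) : ℝ≥0∞ :=
  ∑' p : ℕ × ℕ, ENNReal.ofReal (1 / (x p.1 ^ a * x p.2 ^ b * (x p.1 + x p.2) ^ c))

def Kq : ℝ≥0∞ := ∑' p : ℕ × ℕ, ENNReal.ofReal (1 / (x p.2 ^ 3 * (x p.1 * (x p.1 + x p.2))))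

lemma summable_zr {a : ℕ} (ha : 2 ≤ a) : Summable fun n : ℕ => 1 / x n ^ a := by
  have h : Summable fun n : ℕ => 1 / (n : ℝ) ^ a :=
    Real.summable_one_div_nat_pow.mpr (by omega)
  refine ((summable_nat_add_iff 1).mpr h).congr fun n => ?_
  simp [x]

lemma zr_nonneg (a : ℕ) : 0 ≤ zr a := tsum_nonneg fun n => by have := x_pos n; positivity

lemma zq_eq {a : ℕ} (ha : 2 ≤ a) : zq a = ENNReal.ofReal (zr a) :=
  (ENNReal.ofReal_tsum_of_nonneg (fun n => by have := x_pos n; positivity) (summable_zr ha)).symm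

lemma zq_ne_top {a : ℕ} (ha : 2 ≤ a) : zq a ≠ ⊤ := by
  rw [zq_eq ha]; exact ENNReal.ofReal_ne_top

/-- the independent product double sum -/
lemma prod_eq (s t : ℕ) :
    ∑' p : ℕ × ℕ, ENNReal.ofReal (1 / (x p.1 ^ s * x p.2 ^ t)) = zq s * zq t := by
  rw [ENNReal.tsum_prod']
  have h : ∀ a b : ℕ, ENNReal.ofReal (1 / (x a ^ s * x b ^ t))
      = ENNReal.ofReal (1 / x a ^ s) * ENNReal.ofReal (1 / x b ^ t) := by
    intro a b
    have h1 := x_pos a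
    rw [← ENNReal.ofReal_mul (by positivity)]
    congr 1
    rw [div_mul_div_comm, one_mul]
  calc ∑' (a : ℕ) (b : ℕ), ENNReal.ofReal (1 / (x (a, b).1 ^ s * x (a, b).2 ^ t))
      = ∑' a : ℕ, ENNReal.ofReal (1 / x a ^ s) * zq t := by
        refine tsum_congr fun a => ?_
        rw [zq, ← ENNReal.tsum_mul_left]
        exact tsum_congr fun b => h a b
    _ = zq s * zq t := by rw [ENNReal.tsum_mul_right]; rfl

lemma prod_ne_top {s t : ℕ} (hs : 2 ≤ s) (ht : 2 ≤ t) :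
    ∑' p : ℕ × ℕ, ENNReal.ofReal (1 / (x p.1 ^ s * x p.2 ^ t)) ≠ ⊤ := by
  rw [prod_eq]
  exact ENNReal.mul_ne_top (zq_ne_top hs) (zq_ne_top ht)

lemma tsum_ofReal_le {ι : Type*} {u v : ι → ℝ} (h : ∀ p, u p ≤ v p) :
    ∑' p, ENNReal.ofReal (u p) ≤ ∑' p, ENNReal.ofReal (v p) :=
  Summable.tsum_le_tsum (fun p => ENNReal.ofReal_le_ofReal (h p)) ENNReal.summable ENNReal.summable

lemma dom_ineq {a b : ℕ} (hab : a + b = 5) (ha : 2 ≤ a) (p : ℕ × ℕ) :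
    1 / ((x p.1 + x p.2) ^ a * x p.2 ^ b) ≤ 1 / (x p.1 ^ 2 * x p.2 ^ 3) := by
  obtain ⟨u, v⟩ := p
  have h1 := x_pos u
  have h2 := x_pos v
  refine one_div_le_one_div_of_le (by positivity) ?_
  have ha5 : a ≤ 5 := by omega
  interval_cases a
  · -- a = 2, b = 3
    have hb : b = 3 := by omega
    subst hb
    gcongr
    linarith
  · -- a = 3, b = 2
    have hb : b = 2 := by omega
    subst hb
    calc x u ^ 2 * x v ^ 3 = (x u ^ 2 * x v) * x v ^ 2 := by ring
      _ ≤ ((x u + x v) ^ 2 * (x u + x v)) * x v ^ 2 := by gcongr <;> linarith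
      _ = (x u + x v) ^ 3 * x v ^ 2 := by ring
  · -- a = 4, b = 1
    have hb : b = 1 := by omega
    subst hb
    calc x u ^ 2 * x v ^ 3 = (x u ^ 2 * x v ^ 2) * x v := by ring
      _ ≤ ((x u + x v) ^ 2 * (x u + x v) ^ 2) * x v := by gcongr <;> linarith
      _ = (x u + x v) ^ 4 * x v ^ 1 := by ring
  · -- a = 5, b = 0
    have hb : b = 0 := by omega
    subst hb
    calc x u ^ 2 * x v ^ 3 = (x u ^ 2 * x v ^ 2) * x v := by ring
      _ ≤ ((x u + x v) ^ 2 * (x u + x v) ^ 2) * (x u + x v) := by gcongr <;> linarith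
      _ = (x u + x v) ^ 5 * x v ^ 0 := by ring

lemma Zq_ne_top {a b : ℕ} (hab : a + b = 5) (ha : 2 ≤ a) : Zq a b ≠ ⊤ := by
  refine ne_top_of_le_ne_top (prod_ne_top (s := 2) (t := 3) (le_refl 2) (by norm_num)) ?_
  exact tsum_ofReal_le (dom_ineq hab ha)


lemma tsum_ofReal_add {ι : Type*} {f g h : ι → ℝ} (hg : ∀ i, 0 ≤ g i) (hh : ∀ i, 0 ≤ h i)
    (hfg : ∀ i, f i = g i + h i) :
    ∑' i, ENNReal.ofReal (f i) = ∑' i, ENNReal.ofReal (g i) + ∑' i, ENNReal.ofReal (h i) := by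
  rw [← ENNReal.tsum_add]
  exact tsum_congr fun i => by rw [hfg i, ENNReal.ofReal_add (hg i) (hh i)]

lemma tsum_swap (f : ℕ × ℕ → ℝ≥0∞) : ∑' p, f p = ∑' p : ℕ × ℕ, f (p.2, p.1) :=
  ((Equiv.prodComm ℕ ℕ).tsum_eq f).symm

lemma posx (p : ℕ × ℕ) : 0 < x p.1 ∧ 0 < x p.2 ∧ 0 < x p.1 + x p.2 :=
  ⟨x_pos p.1, x_pos p.2, by have := x_pos p.1; have := x_pos p.2; linarith⟩

lemma eq1 : Tq 2 2 1 = Tq 1 2 2 + Tq 2 1 2 := by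
  refine tsum_ofReal_add (fun p => ?_) (fun p => ?_) (fun p => ?_)
  · obtain ⟨h1, h2, h3⟩ := posx p; positivity
  · obtain ⟨h1, h2, h3⟩ := posx p; positivity
  · obtain ⟨h1, h2, h3⟩ := posx p
    field_simp

lemma eq2 : Tq 2 1 2 = Tq 1 2 2 := by
  rw [Tq, tsum_swap]
  refine tsum_congr fun p => ?_
  congr 1
  ring

lemma eq3 : Tq 1 2 2 = Zq 3 2 + Tq 1 1 3 := by
  refine tsum_ofReal_add (fun p => ?_) (fun p => ?_) (fun p => ?_)
  · obtain ⟨h1, h2, h3⟩ := posx p; positivity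
  · obtain ⟨h1, h2, h3⟩ := posx p; positivity
  · obtain ⟨h1, h2, h3⟩ := posx p
    field_simp

lemma Zq41_swap : ∑' p : ℕ × ℕ, ENNReal.ofReal (1 / (x p.1 * (x p.1 + x p.2) ^ 4)) = Zq 4 1 := by
  rw [Zq, tsum_swap]
  refine tsum_congr fun p => ?_
  congr 1
  rw [add_comm (x p.2) (x p.1)]
  ring

lemma eq4 : Tq 1 1 3 = Zq 4 1 + Zq 4 1 := by
  have h : Tq 1 1 3 = (∑' p : ℕ × ℕ, ENNReal.ofReal (1 / (x p.1 * (x p.1 + x p.2) ^ 4))) + Zq 4 1 := by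
    refine tsum_ofReal_add (fun p => ?_) (fun p => ?_) (fun p => ?_)
    · obtain ⟨h1, h2, h3⟩ := posx p; positivity
    · obtain ⟨h1, h2, h3⟩ := posx p; positivity
    · obtain ⟨h1, h2, h3⟩ := posx p
      field_simp
      ring
  rw [h, Zq41_swap]


lemma tsum_ofReal_add4 {ι : Type*} {f g h k l : ι → ℝ} (hg : ∀ i, 0 ≤ g i) (hh : ∀ i, 0 ≤ h i)
    (hk : ∀ i, 0 ≤ k i) (hl : ∀ i, 0 ≤ l i) (hf : ∀ i, f i = g i + h i + k i + l i) :
    ∑' i, ENNReal.ofReal (f i) = ∑' i, ENNReal.ofReal (g i) + ∑' i, ENNReal.ofReal (h i)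
      + ∑' i, ENNReal.ofReal (k i) + ∑' i, ENNReal.ofReal (l i) := by
  have he : ∀ i, ENNReal.ofReal (f i)
      = ENNReal.ofReal (g i) + ENNReal.ofReal (h i) + ENNReal.ofReal (k i) + ENNReal.ofReal (l i) := by
    intro i
    rw [hf i, ENNReal.ofReal_add (add_nonneg (add_nonneg (hg i) (hh i)) (hk i)) (hl i),
      ENNReal.ofReal_add (add_nonneg (hg i) (hh i)) (hk i), ENNReal.ofReal_add (hg i) (hh i)]
  rw [tsum_congr he, ENNReal.tsum_add, ENNReal.tsum_add, ENNReal.tsum_add]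

lemma tsum_ofReal_mul {ι : Type*} (c : ℝ) (hc : 0 ≤ c) (u : ι → ℝ) :
    ∑' i, ENNReal.ofReal (c * u i) = ENNReal.ofReal c * ∑' i, ENNReal.ofReal (u i) := by
  simp_rw [ENNReal.ofReal_mul hc]
  rw [ENNReal.tsum_mul_left]

lemma eq5 : zq 2 * zq 3 = Zq 2 3 + Zq 3 2 + zq 5 := by
  rw [← prod_eq 2 3, tsum_split3 (fun p => ENNReal.ofReal (1 / (x p.1 ^ 2 * x p.2 ^ 3)))]
  congr 1
  congr 1
  · exact tsum_congr fun p => by rw [x_add]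
  · refine tsum_congr fun p => ?_
    rw [x_add]
    congr 1
    ring
  · refine tsum_congr fun n => ?_
    congr 1
    rw [← pow_add]

lemma eq6 : Kq = Zq 4 1 + zq 5 := by
  have h1 : Kq = ∑' (j : ℕ) (m : ℕ), ENNReal.ofReal (1 / (x j ^ 3 * (x m * (x m + x j)))) := by
    rw [Kq, ENNReal.tsum_prod']
    exact ENNReal.tsum_comm
  have h2 : ∀ j : ℕ, ∑' m : ℕ, ENNReal.ofReal (1 / (x j ^ 3 * (x m * (x m + x j))))
      = ∑' i : ℕ, (if i ≤ j then ENNReal.ofReal (1 / (x i * x j ^ 4)) else 0) := by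
    intro j
    have hnn : ∀ m : ℕ, 0 ≤ 1 / (x j ^ 3 * (x m * (x m + x j))) := by
      intro m
      have := x_pos m; have := x_pos j
      positivity
    rw [← ENNReal.ofReal_tsum_of_nonneg hnn (inner_harm j).summable, (inner_harm j).tsum_eq]
    have hfin : (∑ i ∈ Finset.range (j + 1), 1 / x i) / x j ^ 4
        = ∑ i ∈ Finset.range (j + 1), 1 / (x i * x j ^ 4) := by
      rw [Finset.sum_div]
      exact Finset.sum_congr rfl fun i _ => by rw [div_div]
    rw [hfin, ENNReal.ofReal_sum_of_nonneg (fun i _ => by have := x_pos i; have := x_pos j; positivity)]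
    rw [tsum_eq_sum (s := Finset.range (j + 1))
      (fun b hb => if_neg (by simp at hb; omega))]
    exact Finset.sum_congr rfl fun i hi => by rw [if_pos (by simp at hi; omega)]
  rw [h1, tsum_congr h2,
    ← ENNReal.tsum_prod' (f := fun p : ℕ × ℕ => if p.2 ≤ p.1 then ENNReal.ofReal (1 / (x p.2 * x p.1 ^ 4)) else 0)]
  rw [tsum_split3 (fun p : ℕ × ℕ => if p.2 ≤ p.1 then ENNReal.ofReal (1 / (x p.2 * x p.1 ^ 4)) else 0)]
  have e1 : ∑' p : ℕ × ℕ, (if p.2 ≤ p.1 + p.2 + 1 then ENNReal.ofReal (1 / (x p.2 * x (p.1 + p.2 + 1) ^ 4)) else 0)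
      = Zq 4 1 := by
    refine tsum_congr fun p => ?_
    rw [if_pos (by omega), x_add]
    congr 1
    ring
  have e2 : ∑' p : ℕ × ℕ, (if p.1 + p.2 + 1 ≤ p.2 then ENNReal.ofReal (1 / (x (p.1 + p.2 + 1) * x p.2 ^ 4)) else 0)
      = 0 := by
    exact (tsum_congr (fun p : ℕ × ℕ => if_neg (by omega))).trans tsum_zero
  have e3 : ∑' n : ℕ, (if n ≤ n then ENNReal.ofReal (1 / (x n * x n ^ 4)) else 0) = zq 5 := by
    refine tsum_congr fun n => ?_
    rw [if_pos le_rfl]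
    congr 1
    rw [← pow_succ']
  rw [e1, e2, e3, add_zero]

lemma Zq32_swap : ∑' p : ℕ × ℕ, ENNReal.ofReal (1 / (x p.1 ^ 2 * (x p.1 + x p.2) ^ 3)) = Zq 3 2 := by
  rw [Zq, tsum_swap]
  refine tsum_congr fun p => ?_
  congr 1
  rw [add_comm (x p.2) (x p.1)]
  ring

lemma eq7 : Kq = Zq 4 1 + Zq 2 3 + Zq 3 2 + Zq 4 1 := by
  have h : Kq = (∑' p : ℕ × ℕ, ENNReal.ofReal (1 / (x p.1 * (x p.1 + x p.2) ^ 4)))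
      + (∑' p : ℕ × ℕ, ENNReal.ofReal (1 / ((x p.1 + x p.2) ^ 2 * x p.2 ^ 3)))
      + (∑' p : ℕ × ℕ, ENNReal.ofReal (1 / ((x p.1 + x p.2) ^ 3 * x p.2 ^ 2)))
      + (∑' p : ℕ × ℕ, ENNReal.ofReal (1 / ((x p.1 + x p.2) ^ 4 * x p.2 ^ 1))) := by
    refine tsum_ofReal_add4 (fun p => ?_) (fun p => ?_) (fun p => ?_) (fun p => ?_) (fun p => ?_)
    · obtain ⟨h1, h2, h3⟩ := posx p; positivity
    · obtain ⟨h1, h2, h3⟩ := posx p; positivity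
    · obtain ⟨h1, h2, h3⟩ := posx p; positivity
    · obtain ⟨h1, h2, h3⟩ := posx p; positivity
    · obtain ⟨h1, h2, h3⟩ := posx p
      field_simp
      ring
  rw [h, Zq41_swap]
  rfl

lemma eq8 : Zq 3 2 + 3 * Kq = zq 2 * zq 3 + 2 * Zq 2 3 + Zq 3 2 := by
  have hM1 : ∑' p : ℕ × ℕ, ENNReal.ofReal (1 / (x p.1 ^ 2 * (x p.1 + x p.2) ^ 3)
        + 3 * (1 / (x p.2 ^ 3 * (x p.1 * (x p.1 + x p.2)))))
      = Zq 3 2 + 3 * Kq := by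
    rw [tsum_ofReal_add (f := fun p : ℕ × ℕ => 1 / (x p.1 ^ 2 * (x p.1 + x p.2) ^ 3)
        + 3 * (1 / (x p.2 ^ 3 * (x p.1 * (x p.1 + x p.2)))))
      (fun p => by obtain ⟨h1, h2, h3⟩ := posx p; positivity)
      (fun p => by obtain ⟨h1, h2, h3⟩ := posx p; positivity)
      (fun p => rfl), Zq32_swap, tsum_ofReal_mul 3 (by norm_num), ENNReal.ofReal_ofNat]
    rfl
  have hM2 : ∑' p : ℕ × ℕ, ENNReal.ofReal (1 / (x p.1 ^ 2 * (x p.1 + x p.2) ^ 3)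
        + 3 * (1 / (x p.2 ^ 3 * (x p.1 * (x p.1 + x p.2)))))
      = zq 2 * zq 3 + 2 * Zq 2 3 + Zq 3 2 + 0 := by
    rw [tsum_ofReal_add4
      (g := fun p : ℕ × ℕ => 1 / (x p.1 ^ 2 * x p.2 ^ 3))
      (h := fun p : ℕ × ℕ => 2 * (1 / ((x p.1 + x p.2) ^ 2 * x p.2 ^ 3)))
      (k := fun p : ℕ × ℕ => 1 / ((x p.1 + x p.2) ^ 3 * x p.2 ^ 2))
      (l := fun _ => 0)
      (fun p => by obtain ⟨h1, h2, h3⟩ := posx p; positivity)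
      (fun p => by obtain ⟨h1, h2, h3⟩ := posx p; positivity)
      (fun p => by obtain ⟨h1, h2, h3⟩ := posx p; positivity)
      (fun p => le_rfl)
      (fun p => by obtain ⟨h1, h2, h3⟩ := posx p; field_simp; ring)]
    rw [prod_eq 2 3, tsum_ofReal_mul 2 (by norm_num), ENNReal.ofReal_ofNat]
    simp only [ENNReal.ofReal_zero, tsum_zero]
    rfl
  rw [← hM1, hM2, add_zero]


lemma Z23_ne : Zq 2 3 ≠ ⊤ := Zq_ne_top (by norm_num) (by norm_num)
lemma Z32_ne : Zq 3 2 ≠ ⊤ := Zq_ne_top (by norm_num) (by norm_num)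
lemma Z41_ne : Zq 4 1 ≠ ⊤ := Zq_ne_top (by norm_num) (by norm_num)
lemma zq5_ne : zq 5 ≠ ⊤ := zq_ne_top (by norm_num)
lemma Kq_ne : Kq ≠ ⊤ := by
  rw [eq6]
  exact ENNReal.add_ne_top.mpr ⟨Z41_ne, zq5_ne⟩

lemma T221_eq : Tq 2 2 1 = Zq 3 2 + Zq 3 2 + (Zq 4 1 + Zq 4 1 + (Zq 4 1 + Zq 4 1)) := by
  rw [eq1, eq2, eq3, eq4]
  ring

lemma T221_ne : Tq 2 2 1 ≠ ⊤ := by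
  rw [T221_eq]
  refine ENNReal.add_ne_top.mpr ⟨ENNReal.add_ne_top.mpr ⟨Z32_ne, Z32_ne⟩, ?_⟩
  exact ENNReal.add_ne_top.mpr ⟨ENNReal.add_ne_top.mpr ⟨Z41_ne, Z41_ne⟩,
    ENNReal.add_ne_top.mpr ⟨Z41_ne, Z41_ne⟩⟩

lemma hz_toReal {a : ℕ} (ha : 2 ≤ a) : (zq a).toReal = zr a := by
  rw [zq_eq ha, ENNReal.toReal_ofReal (zr_nonneg a)]

lemma T221_toReal : (Tq 2 2 1).toReal = 2 * (zr 2 * zr 3) - 3 * zr 5 := by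
  set A := (Zq 2 3).toReal with hA
  set B := (Zq 3 2).toReal with hB
  set C := (Zq 4 1).toReal with hC
  set K := Kq.toReal with hK
  have r5 : zr 2 * zr 3 = A + B + zr 5 := by
    have h := congrArg ENNReal.toReal eq5
    rwa [ENNReal.toReal_mul, hz_toReal (by norm_num), hz_toReal (by norm_num),
      ENNReal.toReal_add (ENNReal.add_ne_top.mpr ⟨Z23_ne, Z32_ne⟩) zq5_ne,
      ENNReal.toReal_add Z23_ne Z32_ne, hz_toReal (by norm_num)] at h
  have r6 : K = C + zr 5 := by
    have h := congrArg ENNReal.toReal eq6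
    rwa [ENNReal.toReal_add Z41_ne zq5_ne, hz_toReal (by norm_num)] at h
  have r7 : K = C + A + B + C := by
    have h := congrArg ENNReal.toReal eq7
    rwa [ENNReal.toReal_add (by
        exact ENNReal.add_ne_top.mpr ⟨ENNReal.add_ne_top.mpr ⟨Z41_ne, Z23_ne⟩, Z32_ne⟩) Z41_ne,
      ENNReal.toReal_add (ENNReal.add_ne_top.mpr ⟨Z41_ne, Z23_ne⟩) Z32_ne,
      ENNReal.toReal_add Z41_ne Z23_ne] at h
  have r8 : B + 3 * K = zr 2 * zr 3 + 2 * A + B := by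
    have h := congrArg ENNReal.toReal eq8
    have hzz : zq 2 * zq 3 ≠ ⊤ :=
      ENNReal.mul_ne_top (zq_ne_top (by norm_num)) (zq_ne_top (by norm_num))
    have h2A : (2 : ℝ≥0∞) * Zq 2 3 ≠ ⊤ := ENNReal.mul_ne_top (by simp) Z23_ne
    rwa [ENNReal.toReal_add Z32_ne (ENNReal.mul_ne_top (by simp) Kq_ne),
      ENNReal.toReal_mul,
      ENNReal.toReal_add (ENNReal.add_ne_top.mpr ⟨hzz, h2A⟩) Z32_ne,
      ENNReal.toReal_add hzz h2A, ENNReal.toReal_mul, ENNReal.toReal_mul,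
      hz_toReal (show 2 ≤ 2 by norm_num), hz_toReal (show 2 ≤ 3 by norm_num),
      ENNReal.toReal_ofNat, ENNReal.toReal_ofNat] at h
  have rT : (Tq 2 2 1).toReal = B + B + (C + C + (C + C)) := by
    have h := congrArg ENNReal.toReal T221_eq
    have hCC : Zq 4 1 + Zq 4 1 ≠ ⊤ := ENNReal.add_ne_top.mpr ⟨Z41_ne, Z41_ne⟩
    rwa [ENNReal.toReal_add (ENNReal.add_ne_top.mpr ⟨Z32_ne, Z32_ne⟩)
        (ENNReal.add_ne_top.mpr ⟨hCC, hCC⟩),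
      ENNReal.toReal_add Z32_ne Z32_ne, ENNReal.toReal_add hCC hCC,
      ENNReal.toReal_add Z41_ne Z41_ne] at h
  rw [rT]
  linarith


def F (q : ℤ × ℤ) : ℝ := 1 / ((q.1 : ℝ) ^ 2 * (q.2 : ℝ) ^ 2 * |(q.1 : ℝ) - (q.2 : ℝ)|)

lemma F_nonneg (q : ℤ × ℤ) : 0 ≤ F q := by
  unfold F
  positivity

lemma g_inj : Injective (fun p : ℕ × ℕ => (p.1 + 1, p.2 + 1)) := by
  intro p q h
  simp only [Prod.mk.injEq] at h
  exact Prod.ext (by omega) (by omega)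

lemma D_ll : ∑' p : ℕ × ℕ, ENNReal.ofReal (F ((p.1 : ℤ), (p.2 : ℤ))) = Tq 1 2 2 + Tq 1 2 2 := by
  have h0 : ∀ d : ℕ × ℕ, d ∉ Set.range (fun p : ℕ × ℕ => (p.1 + 1, p.2 + 1)) →
      ENNReal.ofReal (F ((d.1 : ℤ), (d.2 : ℤ))) = 0 := by
    intro d hd
    have : d.1 = 0 ∨ d.2 = 0 := by
      by_contra hc
      push_neg at hc
      exact hd ⟨(d.1 - 1, d.2 - 1), by dsimp only; exact Prod.ext (by omega) (by omega)⟩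
    rcases this with h | h <;> simp [F, h]
  rw [← tsum_inj g_inj (fun d : ℕ × ℕ => ENNReal.ofReal (F ((d.1 : ℤ), (d.2 : ℤ)))) h0]
  rw [tsum_split3 (fun p : ℕ × ℕ => ENNReal.ofReal (F (((p.1 + 1 : ℕ) : ℤ), ((p.2 + 1 : ℕ) : ℤ))))]
  have e1 : ∑' p : ℕ × ℕ, ENNReal.ofReal (F (((p.1 + p.2 + 1 + 1 : ℕ) : ℤ), ((p.2 + 1 : ℕ) : ℤ)))
      = Tq 1 2 2 := by
    refine tsum_congr fun p => ?_
    congr 1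
    simp only [F, x]
    push_cast
    rw [show ((p.1 : ℝ) + p.2 + 1 + 1) - ((p.2 : ℝ) + 1) = (p.1 : ℝ) + 1 by ring,
      abs_of_pos (by positivity)]
    ring
  have e2 : ∑' p : ℕ × ℕ, ENNReal.ofReal (F (((p.2 + 1 : ℕ) : ℤ), ((p.1 + p.2 + 1 + 1 : ℕ) : ℤ)))
      = Tq 1 2 2 := by
    refine tsum_congr fun p => ?_
    congr 1
    simp only [F, x]
    push_cast
    rw [show ((p.2 : ℝ) + 1) - ((p.1 : ℝ) + p.2 + 1 + 1) = -((p.1 : ℝ) + 1) by ring, abs_neg,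
      abs_of_pos (by positivity)]
    ring
  have e3 : ∑' n : ℕ, ENNReal.ofReal (F (((n + 1 : ℕ) : ℤ), ((n + 1 : ℕ) : ℤ))) = 0 := by
    refine (tsum_congr fun n => ?_).trans tsum_zero
    simp [F]
  rw [e1, e2, e3, add_zero]


lemma D_rr : ∑' p : ℕ × ℕ, ENNReal.ofReal (F (Int.negSucc p.1, Int.negSucc p.2))
    = Tq 1 2 2 + Tq 1 2 2 := by
  rw [tsum_split3 (fun p : ℕ × ℕ => ENNReal.ofReal (F (Int.negSucc p.1, Int.negSucc p.2)))]
  have e1 : ∑' p : ℕ × ℕ, ENNReal.ofReal (F (Int.negSucc (p.1 + p.2 + 1), Int.negSucc p.2))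
      = Tq 1 2 2 := by
    refine tsum_congr fun p => ?_
    congr 1
    simp only [F, x, Int.cast_negSucc]
    push_cast
    rw [show -((p.1 : ℝ) + p.2 + 1 + 1) - -((p.2 : ℝ) + 1) = -((p.1 : ℝ) + 1) by ring, abs_neg,
      abs_of_pos (by positivity)]
    ring
  have e2 : ∑' p : ℕ × ℕ, ENNReal.ofReal (F (Int.negSucc p.2, Int.negSucc (p.1 + p.2 + 1)))
      = Tq 1 2 2 := by
    refine tsum_congr fun p => ?_
    congr 1
    simp only [F, x, Int.cast_negSucc]
    push_cast
    rw [show -((p.2 : ℝ) + 1) - -((p.1 : ℝ) + p.2 + 1 + 1) = (p.1 : ℝ) + 1 by ring,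
      abs_of_pos (by positivity)]
    ring
  have e3 : ∑' n : ℕ, ENNReal.ofReal (F (Int.negSucc n, Int.negSucc n)) = 0 := by
    refine (tsum_congr fun n => ?_).trans tsum_zero
    simp [F]
  rw [e1, e2, e3, add_zero]

lemma D_lr : ∑' p : ℕ × ℕ, ENNReal.ofReal (F ((p.1 : ℤ), Int.negSucc p.2)) = Tq 2 2 1 := by
  have hg : Injective (fun p : ℕ × ℕ => (p.1 + 1, p.2)) := by
    intro p q h
    simp only [Prod.mk.injEq] at h
    exact Prod.ext (by omega) h.2
  have h0 : ∀ d : ℕ × ℕ, d ∉ Set.range (fun p : ℕ × ℕ => (p.1 + 1, p.2)) →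
      ENNReal.ofReal (F ((d.1 : ℤ), Int.negSucc d.2)) = 0 := by
    intro d hd
    have h : d.1 = 0 := by
      by_contra hc
      exact hd ⟨(d.1 - 1, d.2), by dsimp only; exact Prod.ext (by omega) rfl⟩
    simp [F, h]
  rw [← tsum_inj hg (fun d : ℕ × ℕ => ENNReal.ofReal (F ((d.1 : ℤ), Int.negSucc d.2))) h0]
  refine tsum_congr fun p => ?_
  congr 1
  simp only [F, x, Int.cast_negSucc]
  push_cast
  rw [show ((p.1 : ℝ) + 1) - -((p.2 : ℝ) + 1) = ((p.1 : ℝ) + 1) + ((p.2 : ℝ) + 1) by ring,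
    abs_of_pos (by positivity)]
  ring

lemma D_rl : ∑' p : ℕ × ℕ, ENNReal.ofReal (F (Int.negSucc p.1, (p.2 : ℤ))) = Tq 2 2 1 := by
  have hg : Injective (fun p : ℕ × ℕ => (p.1, p.2 + 1)) := by
    intro p q h
    simp only [Prod.mk.injEq] at h
    exact Prod.ext h.1 (by omega)
  have h0 : ∀ d : ℕ × ℕ, d ∉ Set.range (fun p : ℕ × ℕ => (p.1, p.2 + 1)) →
      ENNReal.ofReal (F (Int.negSucc d.1, (d.2 : ℤ))) = 0 := by
    intro d hd
    have h : d.2 = 0 := by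
      by_contra hc
      exact hd ⟨(d.1, d.2 - 1), by dsimp only; exact Prod.ext rfl (by omega)⟩
    simp [F, h]
  rw [← tsum_inj hg (fun d : ℕ × ℕ => ENNReal.ofReal (F (Int.negSucc d.1, (d.2 : ℤ)))) h0]
  refine tsum_congr fun p => ?_
  congr 1
  simp only [F, x, Int.cast_negSucc]
  push_cast
  rw [show -((p.1 : ℝ) + 1) - ((p.2 : ℝ) + 1) = -(((p.1 : ℝ) + 1) + ((p.2 : ℝ) + 1)) by ring,
    abs_neg, abs_of_pos (by positivity)]
  ring

lemma Fq_eq : ∑' q : ℤ × ℤ, ENNReal.ofReal (F q) = 4 * Tq 2 2 1 := by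
  have he := (Equiv.prodCongr Equiv.intEquivNatSumNat.symm Equiv.intEquivNatSumNat.symm).tsum_eq
    (fun q : ℤ × ℤ => ENNReal.ofReal (F q))
  rw [← he, ENNReal.tsum_prod' (f := fun z : (ℕ ⊕ ℕ) × (ℕ ⊕ ℕ) => ENNReal.ofReal
    (F (Equiv.prodCongr Equiv.intEquivNatSumNat.symm Equiv.intEquivNatSumNat.symm z)))]
  rw [tsum_sum_type (f := fun a : ℕ ⊕ ℕ => ∑' b : ℕ ⊕ ℕ, ENNReal.ofReal
    (F (Equiv.prodCongr Equiv.intEquivNatSumNat.symm Equiv.intEquivNatSumNat.symm (a, b))))]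
  have hin : ∀ m : ℤ, ∑' b : ℕ ⊕ ℕ, ENNReal.ofReal (F (m, Equiv.intEquivNatSumNat.symm b))
      = ∑' j : ℕ, ENNReal.ofReal (F (m, (j : ℤ)))
        + ∑' j : ℕ, ENNReal.ofReal (F (m, Int.negSucc j)) := fun m =>
    tsum_sum_type (fun b : ℕ ⊕ ℕ => ENNReal.ofReal (F (m, Equiv.intEquivNatSumNat.symm b)))
  have hl : ∑' (a : ℕ) (b : ℕ ⊕ ℕ), ENNReal.ofReal
        (F (Equiv.prodCongr Equiv.intEquivNatSumNat.symm Equiv.intEquivNatSumNat.symm (.inl a, b)))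
      = ∑' (a : ℕ) (j : ℕ), ENNReal.ofReal (F ((a : ℤ), (j : ℤ)))
        + ∑' (a : ℕ) (j : ℕ), ENNReal.ofReal (F ((a : ℤ), Int.negSucc j)) := by
    rw [← ENNReal.tsum_add]
    exact tsum_congr fun a => hin (a : ℤ)
  have hr : ∑' (a : ℕ) (b : ℕ ⊕ ℕ), ENNReal.ofReal
        (F (Equiv.prodCongr Equiv.intEquivNatSumNat.symm Equiv.intEquivNatSumNat.symm (.inr a, b)))
      = ∑' (a : ℕ) (j : ℕ), ENNReal.ofReal (F (Int.negSucc a, (j : ℤ)))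
        + ∑' (a : ℕ) (j : ℕ), ENNReal.ofReal (F (Int.negSucc a, Int.negSucc j)) := by
    rw [← ENNReal.tsum_add]
    exact tsum_congr fun a => hin (Int.negSucc a)
  rw [hl, hr]
  have c1 : ∑' (a : ℕ) (j : ℕ), ENNReal.ofReal (F ((a : ℤ), (j : ℤ))) = Tq 1 2 2 + Tq 1 2 2 := by
    rw [← ENNReal.tsum_prod' (f := fun p : ℕ × ℕ => ENNReal.ofReal (F ((p.1 : ℤ), (p.2 : ℤ))))]
    exact D_ll
  have c2 : ∑' (a : ℕ) (j : ℕ), ENNReal.ofReal (F ((a : ℤ), Int.negSucc j)) = Tq 2 2 1 := by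
    rw [← ENNReal.tsum_prod' (f := fun p : ℕ × ℕ => ENNReal.ofReal (F ((p.1 : ℤ), Int.negSucc p.2)))]
    exact D_lr
  have c3 : ∑' (a : ℕ) (j : ℕ), ENNReal.ofReal (F (Int.negSucc a, (j : ℤ))) = Tq 2 2 1 := by
    rw [← ENNReal.tsum_prod' (f := fun p : ℕ × ℕ => ENNReal.ofReal (F (Int.negSucc p.1, (p.2 : ℤ))))]
    exact D_rl
  have c4 : ∑' (a : ℕ) (j : ℕ), ENNReal.ofReal (F (Int.negSucc a, Int.negSucc j))
      = Tq 1 2 2 + Tq 1 2 2 := by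
    rw [← ENNReal.tsum_prod'
      (f := fun p : ℕ × ℕ => ENNReal.ofReal (F (Int.negSucc p.1, Int.negSucc p.2)))]
    exact D_rr
  rw [c1, c2, c3, c4]
  have hT : Tq 2 2 1 = Tq 1 2 2 + Tq 1 2 2 := by rw [eq1, eq2]
  rw [← hT]
  ring


lemma hasSumF : HasSum F (8 * zr 2 * zr 3 - 12 * zr 5) := by
  set r : ℝ := 8 * zr 2 * zr 3 - 12 * zr 5 with hr
  have hr4 : r = 4 * (Tq 2 2 1).toReal := by
    rw [T221_toReal, hr]
    ring
  have hS : ∑' q : ℤ × ℤ, ENNReal.ofReal (F q) = ENNReal.ofReal r := by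
    rw [Fq_eq, ← ENNReal.ofReal_toReal T221_ne,
      show (4 : ℝ≥0∞) = ENNReal.ofReal (4 : ℝ) by simp,
      ← ENNReal.ofReal_mul (by norm_num), ← hr4]
  have hrnn : 0 ≤ r := by
    rw [hr4]
    positivity
  have hsum : Summable F := by
    have h1 : ∑' q : ℤ × ℤ, ENNReal.ofReal (F q) ≠ ⊤ := by
      rw [hS]; exact ENNReal.ofReal_ne_top
    refine (ENNReal.summable_toReal h1).congr fun q => ?_
    rw [ENNReal.toReal_ofReal (F_nonneg q)]
  have htsum : ∑' q, F q = r := by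
    have h := ENNReal.ofReal_tsum_of_nonneg F_nonneg hsum
    rw [hS] at h
    exact (ENNReal.ofReal_eq_ofReal_iff (tsum_nonneg fun q => F_nonneg q) hrnn).mp h
  exact hsum.hasSum_iff.mpr htsum

lemma zetaR_nat (a : ℕ) : zetaR (a : ℝ) = zr a :=
  tsum_congr fun n => by rw [Real.rpow_natCast]; rfl

end

end ZS

/-- The weight-5 double sum over nonzero integers `m ≠ ℓ`:
`∑ 1/(m² ℓ² |m−ℓ|) = 8ζ(2)ζ(3) − 12ζ(5)`. -/
theorem stmt5 :
    HasSum
      (fun p : {q : ℤ × ℤ // q.1 ≠ 0 ∧ q.2 ≠ 0 ∧ q.1 ≠ q.2} =>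
        1 / ((p.1.1 : ℝ) ^ 2 * (p.1.2 : ℝ) ^ 2 * |(p.1.1 : ℝ) - (p.1.2 : ℝ)|))
      (8 * zetaR 2 * zetaR 3 - 12 * zetaR 5) := by
  have z2 : zetaR 2 = ZS.zr 2 := by
    rw [show (2 : ℝ) = ((2 : ℕ) : ℝ) by norm_num]
    exact ZS.zetaR_nat 2
  have z3 : zetaR 3 = ZS.zr 3 := by
    rw [show (3 : ℝ) = ((3 : ℕ) : ℝ) by norm_num]
    exact ZS.zetaR_nat 3
  have z5 : zetaR 5 = ZS.zr 5 := by
    rw [show (5 : ℝ) = ((5 : ℕ) : ℝ) by norm_num]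
    exact ZS.zetaR_nat 5
  rw [z2, z3, z5]
  have hsupp : Function.support ZS.F ⊆ {q : ℤ × ℤ | q.1 ≠ 0 ∧ q.2 ≠ 0 ∧ q.1 ≠ q.2} := by
    intro q hq
    simp only [Function.mem_support] at hq
    refine ⟨fun h => hq ?_, fun h => hq ?_, fun h => hq ?_⟩ <;> simp [ZS.F, h]
  exact (hasSum_subtype_iff_of_support_subset hsupp).mpr ZS.hasSumF
end

section
/- For every real number ξ with 0 < ξ < 1 and every nonzero integer j, the series ∑_{ℓ ∈ ℤ} 1/(|ℓ + ξ| · |ℓ − j + ξ|) converges and equals (2/|j|) · ∑_{k=0}^{|j|−1} ( 1/(k + ξ) + 1/(k + 1 − ξ) ). -/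
/-!
Partial fractions: for `n > 0`, `1 / ((ℓ + ξ)(ℓ - n + ξ)) = (1/n) (1/(ℓ - n + ξ) - 1/(ℓ + ξ))`.
On each of the ranges `ℓ ≥ n`, `0 ≤ ℓ < n` and `ℓ < 0` both factors have a fixed sign; the two
infinite ranges telescope to `(1/n) ∑_{k<n} 1/(k+ξ)` and `(1/n) ∑_{k<n} 1/(k+1-ξ)`, and the finite
middle range contributes both sums once more. Negative `j` is reduced to `|j|` by the shift
`ℓ ↦ ℓ + |j|`.
-/

open Filter Finset Topology

theorem Antitone.hasSum_sub_add {h : ℕ → ℝ} (hh : Antitone h) (hlim : Tendsto h atTop (𝓝 0))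
    (n : ℕ) : HasSum (fun m => h m - h (m + n)) (∑ k ∈ range n, h k) := by
  have partial_sum (M : ℕ) :
      ∑ m ∈ range M, (h m - h (m + n)) = ∑ k ∈ range n, h k - ∑ k ∈ range n, h (k + M) := by
    induction M with
    | zero => simp
    | succ M ih =>
      have shift := (sum_range_succ (fun k => h (k + M)) n).symm.trans
        (sum_range_succ' (fun k => h (k + M)) n)
      simp only [add_right_comm _ 1 M, zero_add, add_comm n M] at shift
      simp only [sum_range_succ, ih, ← add_assoc]
      linarith
  rw [hasSum_iff_tendsto_nat_of_nonneg fun m => sub_nonneg.2 (hh (Nat.le_add_right m n))]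
  simp_rw [partial_sum]
  have tail : Tendsto (fun M => ∑ k ∈ range n, h (k + M)) atTop (𝓝 0) := by
    simpa using tendsto_finsetSum (range n) fun k _ =>
      hlim.comp ((tendsto_add_atTop_nat k).congr fun M => add_comm M k)
  simpa using tendsto_const_nhds.sub tail

theorem hasSum_one_div_add_sub_one_div_add {c : ℝ} (hc : 0 < c) (n : ℕ) :
    HasSum (fun m : ℕ => 1 / ((m : ℝ) + c) - 1 / ((m : ℝ) + n + c))
      (∑ k ∈ range n, 1 / ((k : ℝ) + c)) := by
  have anti : Antitone fun m : ℕ => 1 / ((m : ℝ) + c) := fun a b hab =>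
    one_div_le_one_div_of_le (by positivity) (by gcongr)
  have lim : Tendsto (fun m : ℕ => 1 / ((m : ℝ) + c)) atTop (𝓝 0) := by
    simp only [one_div]
    exact tendsto_inv_atTop_zero.comp
      (tendsto_atTop_add_const_right _ c tendsto_natCast_atTop_atTop)
  simpa using anti.hasSum_sub_add lim n

noncomputable def tauTerm (ξ a : ℝ) (ℓ : ℤ) : ℝ := 1 / (|(ℓ : ℝ) + ξ| * |(ℓ : ℝ) - a + ξ|)

section

variable {ξ : ℝ} {n : ℕ}

theorem tauTerm_natCast_add (h0 : 0 < ξ) (hn : n ≠ 0) (m : ℕ) :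
    tauTerm ξ n (m + n : ℕ) = (1 / ((m : ℝ) + ξ) - 1 / ((m : ℝ) + n + ξ)) / n := by
  have hx : 0 < (m : ℝ) + ξ := by positivity
  have hy : 0 < (m : ℝ) + n + ξ := by positivity
  have : tauTerm ξ n (m + n : ℕ) = 1 / (((m : ℝ) + ξ) * (m + n + ξ)) := by
    simp only [tauTerm]
    push_cast
    rw [abs_of_pos (by linarith), abs_of_pos (by linarith)]
    ring
  rw [this]
  field_simp
  ring

theorem tauTerm_neg_natCast_add_one (h1 : ξ < 1) (hn : n ≠ 0) (m : ℕ) :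
    tauTerm ξ n (-(m + 1)) = (1 / ((m : ℝ) + (1 - ξ)) - 1 / ((m : ℝ) + n + (1 - ξ))) / n := by
  have hx : 0 < (m : ℝ) + (1 - ξ) := by linarith [m.cast_nonneg (α := ℝ)]
  have hy : 0 < (m : ℝ) + n + (1 - ξ) := by linarith [n.cast_nonneg (α := ℝ)]
  have : tauTerm ξ n (-(m + 1)) = 1 / (((m : ℝ) + (1 - ξ)) * (m + n + (1 - ξ))) := by
    simp only [tauTerm]
    push_cast
    rw [abs_of_neg (by linarith), abs_of_neg (by linarith)]
    ring
  rw [this]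
  field_simp
  ring

theorem tauTerm_natCast_of_lt (h0 : 0 < ξ) (h1 : ξ < 1) {m : ℕ} (hm : m < n) :
    tauTerm ξ n m = (1 / ((m : ℝ) + ξ) + 1 / ((n - 1 - m : ℕ) + (1 - ξ))) / n := by
  have hmn : (m : ℝ) + 1 ≤ n := by exact_mod_cast hm
  have hcast : ((n - 1 - m : ℕ) : ℝ) = n - 1 - m := by
    rw [Nat.sub_sub, Nat.cast_sub (by omega)]
    push_cast
    ring
  have hx : 0 < (m : ℝ) + ξ := by positivity
  have hy : 0 < (n : ℝ) - 1 - m + (1 - ξ) := by linarith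
  have : tauTerm ξ n m = 1 / (((m : ℝ) + ξ) * (n - 1 - m + (1 - ξ))) := by
    simp only [tauTerm, Int.cast_natCast]
    rw [abs_of_pos hx, abs_of_neg (by linarith)]
    ring
  have hn : (n : ℝ) ≠ 0 := by linarith
  rw [this, hcast]
  field_simp
  ring

theorem hasSum_tauTerm_natCast (h0 : 0 < ξ) (h1 : ξ < 1) (hn : n ≠ 0) :
    HasSum (tauTerm ξ n)
      ((2 / n) * ∑ k ∈ range n, (1 / ((k : ℝ) + ξ) + 1 / ((k : ℝ) + 1 - ξ))) := by
  have right := (hasSum_one_div_add_sub_one_div_add h0 n).div_const (n : ℝ)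
  simp only [← tauTerm_natCast_add h0 hn] at right
  have left := (hasSum_one_div_add_sub_one_div_add (sub_pos.2 h1) n).div_const (n : ℝ)
  simp only [← tauTerm_neg_natCast_add_one h1 hn] at left
  have middle : ∑ m ∈ range n, tauTerm ξ n m =
      (∑ k ∈ range n, 1 / ((k : ℝ) + ξ)) / n + (∑ k ∈ range n, 1 / ((k : ℝ) + (1 - ξ))) / n := by
    rw [← sum_range_reflect (fun k => 1 / ((k : ℝ) + (1 - ξ))), sum_div, sum_div,
      ← sum_add_distrib]
    exact sum_congr rfl fun m hm => by rw [tauTerm_natCast_of_lt h0 h1 (mem_range.1 hm), add_div]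
  have total := ((hasSum_nat_add_iff (f := fun m : ℕ => tauTerm ξ n m) n).1 right)
    |>.of_nat_of_neg_add_one left
  have value : ∀ a b : ℝ, a / n + (a / n + b / n) + b / n = 2 / n * (a + b) := fun a b => by ring
  rw [middle, value, ← sum_add_distrib] at total
  simpa only [add_sub_assoc] using total

end

/-- Exact identity for `τ_ξ(j) = ∑_{ℓ∈ℤ} 1/(|ℓ+ξ||ℓ−j+ξ|)` with `0 < ξ < 1`, `j ≠ 0`:
`τ_ξ(j) = (2/|j|) (∑_{k=0}^{|j|−1} 1/(k+ξ) + ∑_{k=0}^{|j|−1} 1/(k+1−ξ))`. -/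
theorem stmt6 (ξ : ℝ) (h0 : 0 < ξ) (h1 : ξ < 1) (j : ℤ) (hj : j ≠ 0) :
    HasSum (fun ℓ : ℤ => 1 / (|(ℓ : ℝ) + ξ| * |(ℓ : ℝ) - (j : ℝ) + ξ|))
      ((2 / |(j : ℝ)|) *
        ∑ k ∈ Finset.range j.natAbs, (1 / ((k : ℝ) + ξ) + 1 / ((k : ℝ) + 1 - ξ))) := by
  obtain ⟨n, rfl | rfl⟩ := Int.eq_nat_or_neg j
  · simp only [Int.cast_natCast, Nat.abs_cast, Int.natAbs_natCast]
    exact hasSum_tauTerm_natCast h0 h1 (by simpa using hj)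
  · have shifted := (Equiv.addRight (n : ℤ)).hasSum_iff.2
      (hasSum_tauTerm_natCast h0 h1 (n := n) (by simpa using hj))
    simp only [Int.cast_neg, Int.cast_natCast, abs_neg, Nat.abs_cast, Int.natAbs_neg,
      Int.natAbs_natCast]
    refine shifted.congr_fun fun ℓ => ?_
    simp only [Function.comp_apply, Equiv.coe_addRight, tauTerm]
    push_cast
    rw [mul_comm]
    ring_nf
end

section
/- Fix α₀ := 1/20 and set L₅ := 4/19 + (2/5) ζ(5) + 4 ζ(7) α₀² / (7 (1 − α₀²)). For every integer m ≥ 1 and every real α with 0 ≤ α ≤ α₀, define u_m(α) := (m/(m − α)) · (Γ(1 − α)/Γ(1 + α)) · (Γ(m + α)/Γ(m − α)). Then | log u_m(α) − [ (2 H_{m−1} + 1/m) α + α²/(2m²) + ((2/3) H^{(3)}_{m−1} + 1/(3m³)) α³ + α⁴/(4m⁴) ] | ≤ L₅ α⁵. -/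
/-- `H_M^{(3)} = ∑_{k=1}^M 1/k³`, with `H_0^{(3)} = 0`. -/
noncomputable def harmonic3R (M : ℕ) : ℝ := ∑ k ∈ Finset.range M, 1 / ((k : ℝ) + 1) ^ 3

open Finset Real

/-!
By `Γ(x + 1) = x Γ(x)`, `u_m(α) = (1 - α/m)⁻¹ ∏_{k=1}^{m-1} (1 + α/k) / (1 - α/k)`, so
`log u_m(α)` is `-log (1 - α/m)` plus the sum over `1 ≤ k < m` of
`log (1 + x) - log (1 - x) = 2 ∑ x^(2j+1)/(2j+1)` at `x = α/k`. After truncation, the tails of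
both power series are dominated by geometric series; the tail of `-log (1 - α/m)` gives
`1/(5(1 - α₀)) = 4/19`, and the sums of `k⁻⁵` and `k⁻⁷` left by the others are bounded by `ζ(5)`
and `ζ(7)`.
-/

lemma Real.Gamma_add_nat_eq_mul_prod {x : ℝ} (hx : 0 < x) (n : ℕ) :
    Gamma (x + n) = Gamma x * ∏ k ∈ range n, (x + k) := by
  induction n with
  | zero => simp
  | succ n ih =>
    rw [Nat.cast_succ, ← add_assoc, Gamma_add_one (by positivity), ih, prod_range_succ]
    ring

lemma gamma_ratio_eq_prod {α : ℝ} (hα : |α| < 1) (n : ℕ) :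
    ((n + 1 : ℝ) / (n + 1 - α)) * (Gamma (1 - α) / Gamma (1 + α)) *
        (Gamma (n + 1 + α) / Gamma (n + 1 - α))
      = (1 - α / (n + 1))⁻¹ * ∏ k ∈ range n, (1 + α / (k + 1)) / (1 - α / (k + 1)) := by
  obtain ⟨hα_gt, hα_lt⟩ := abs_lt.mp hα
  have hΓadd := Gamma_add_nat_eq_mul_prod (x := 1 + α) (by linarith) n
  have hΓsub := Gamma_add_nat_eq_mul_prod (x := 1 - α) (by linarith) n
  rw [show 1 + α + n = n + 1 + α by ring] at hΓadd
  rw [show 1 - α + n = n + 1 - α by ring] at hΓsub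
  have hfactor : ∀ k ∈ range n, (1 + α / (k + 1)) / (1 - α / (k + 1))
      = (1 + α + k) / (1 - α + k) := by
    intro k _
    have hk : (k + 1 : ℝ) ≠ 0 := by positivity
    rw [one_add_div hk, one_sub_div hk, div_div_div_cancel_right₀ hk]
    ring_nf
  have hΓadd_pos := Gamma_pos_of_pos (by linarith : 0 < 1 + α)
  have hΓsub_pos := Gamma_pos_of_pos (by linarith : 0 < 1 - α)
  have hprod_pos : 0 < ∏ k ∈ range n, (1 - α + k) :=
    prod_pos fun k _ => by linarith [k.cast_nonneg (α := ℝ)]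
  have hn : (0 : ℝ) < n + 1 - α := by linarith [n.cast_nonneg (α := ℝ)]
  rw [hΓadd, hΓsub, prod_congr rfl hfactor, prod_div_distrib]
  field_simp

lemma log_gamma_ratio_eq_sum {α : ℝ} (hα : |α| < 1) (n : ℕ) :
    log (((n + 1 : ℝ) / (n + 1 - α)) * (Gamma (1 - α) / Gamma (1 + α)) *
        (Gamma (n + 1 + α) / Gamma (n + 1 - α)))
      = -log (1 - α / (n + 1))
        + ∑ k ∈ range n, (log (1 + α / (k + 1)) - log (1 - α / (k + 1))) := by
  have hdiv : ∀ c : ℝ, 1 ≤ c → |α / c| < 1 := fun c hc => by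
    rw [abs_div, abs_of_pos (by linarith : 0 < c)]
    exact (div_le_self (abs_nonneg α) hc).trans_lt hα
  have hpos : ∀ c : ℝ, 1 ≤ c → 0 < 1 + α / c ∧ 0 < 1 - α / c := fun c hc => by
    have := abs_lt.mp (hdiv c hc)
    constructor <;> linarith
  have hk : ∀ k : ℕ, (1 : ℝ) ≤ k + 1 := fun k => by linarith [k.cast_nonneg (α := ℝ)]
  rw [gamma_ratio_eq_prod hα, log_mul (inv_ne_zero (hpos _ (hk n)).2.ne'), log_inv,
    log_prod fun k _ => (div_pos (hpos _ (hk k)).1 (hpos _ (hk k)).2).ne']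
  · exact congrArg _ (sum_congr rfl fun k _ => log_div (hpos _ (hk k)).1.ne' (hpos _ (hk k)).2.ne')
  · exact (prod_pos fun k _ => div_pos (hpos _ (hk k)).1 (hpos _ (hk k)).2).ne'

noncomputable def logOneSubRemainder (x : ℝ) : ℝ :=
  -log (1 - x) - (x + x ^ 2 / 2 + x ^ 3 / 3 + x ^ 4 / 4)

noncomputable def logRatioRemainder (x : ℝ) : ℝ :=
  log (1 + x) - log (1 - x) - (2 * x + 2 * x ^ 3 / 3 + 2 * x ^ 5 / 5)

lemma logOneSubRemainder_eq_tsum {x : ℝ} (hx : |x| < 1) :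
    logOneSubRemainder x = x ^ 5 * ∑' n : ℕ, x ^ n / (n + 5) := by
  have h := (hasSum_nat_add_iff' 4).mpr (hasSum_pow_div_log_of_abs_lt_one hx)
  have hterm : (fun n : ℕ => x ^ (n + 4 + 1) / ((n + 4 : ℕ) + 1 : ℝ))
      = fun n : ℕ => x ^ 5 * (x ^ n / (n + 5)) := by
    ext n
    push_cast
    ring
  have hhead : ∑ i ∈ range 4, x ^ (i + 1) / ((i : ℝ) + 1)
      = x + x ^ 2 / 2 + x ^ 3 / 3 + x ^ 4 / 4 := by
    simp only [sum_range_succ, sum_range_zero]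
    norm_num
  rw [hterm, hhead] at h
  rw [logOneSubRemainder, ← h.tsum_eq, tsum_mul_left]

lemma logRatioRemainder_eq_tsum {x : ℝ} (hx : |x| < 1) :
    logRatioRemainder x = 2 * x ^ 7 * ∑' k : ℕ, (x ^ 2) ^ k / (2 * k + 7) := by
  have h := (hasSum_nat_add_iff' 3).mpr (hasSum_log_sub_log_of_abs_lt_one hx)
  have hterm : (fun k : ℕ => 2 * (1 / (2 * ((k + 3 : ℕ) : ℝ) + 1)) * x ^ (2 * (k + 3) + 1))
      = fun k : ℕ => 2 * x ^ 7 * ((x ^ 2) ^ k / (2 * k + 7)) := by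
    ext k
    push_cast
    ring
  have hhead : ∑ i ∈ range 3, 2 * (1 / (2 * (i : ℝ) + 1)) * x ^ (2 * i + 1)
      = 2 * x + 2 * x ^ 3 / 3 + 2 * x ^ 5 / 5 := by
    simp only [sum_range_succ, sum_range_zero]
    norm_num
    ring
  rw [hterm, hhead] at h
  rw [logRatioRemainder, ← h.tsum_eq, tsum_mul_left]

lemma tsum_pow_div_le {y b : ℝ} {g : ℕ → ℝ} (hy₀ : 0 ≤ y) (hy₁ : y < 1) (hb : 0 < b)
    (hg : ∀ k, b ≤ g k) : ∑' k, y ^ k / g k ≤ 1 / (b * (1 - y)) := by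
  have hgeom := (hasSum_geometric_of_lt_one hy₀ hy₁).mul_left b⁻¹
  have hle : ∀ k, y ^ k / g k ≤ b⁻¹ * y ^ k := fun k => by
    rw [div_eq_inv_mul]
    gcongr
    exact hg k
  have hsummable : Summable fun k => y ^ k / g k :=
    hgeom.summable.of_nonneg_of_le (fun k => div_nonneg (by positivity) (hb.le.trans (hg k))) hle
  calc ∑' k, y ^ k / g k ≤ b⁻¹ * (1 - y)⁻¹ :=
        (hsummable.tsum_le_tsum hle hgeom.summable).trans_eq hgeom.tsum_eq
    _ = 1 / (b * (1 - y)) := by rw [one_div, mul_inv]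

lemma logOneSubRemainder_nonneg {x : ℝ} (hx₀ : 0 ≤ x) (hx₁ : x < 1) :
    0 ≤ logOneSubRemainder x := by
  rw [logOneSubRemainder_eq_tsum (abs_lt.mpr ⟨by linarith, hx₁⟩)]
  exact mul_nonneg (by positivity) (tsum_nonneg fun n => by positivity)

lemma logOneSubRemainder_le {x : ℝ} (hx₀ : 0 ≤ x) (hx₁ : x < 1) :
    logOneSubRemainder x ≤ x ^ 5 / (5 * (1 - x)) := by
  rw [logOneSubRemainder_eq_tsum (abs_lt.mpr ⟨by linarith, hx₁⟩), ← mul_one_div]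
  gcongr
  exact tsum_pow_div_le (b := 5) hx₀ hx₁ (by norm_num)
    fun n => by linarith [n.cast_nonneg (α := ℝ)]

lemma logRatioRemainder_nonneg {x : ℝ} (hx₀ : 0 ≤ x) (hx₁ : x < 1) :
    0 ≤ logRatioRemainder x := by
  rw [logRatioRemainder_eq_tsum (abs_lt.mpr ⟨by linarith, hx₁⟩)]
  exact mul_nonneg (by positivity) (tsum_nonneg fun n => by positivity)

lemma logRatioRemainder_le {x : ℝ} (hx₀ : 0 ≤ x) (hx₁ : x < 1) :
    logRatioRemainder x ≤ 2 * x ^ 7 / (7 * (1 - x ^ 2)) := by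
  rw [logRatioRemainder_eq_tsum (abs_lt.mpr ⟨by linarith, hx₁⟩), ← mul_one_div]
  gcongr
  exact tsum_pow_div_le (b := 7) (by positivity) (by nlinarith) (by norm_num)
    fun n => by linarith [n.cast_nonneg (α := ℝ)]

lemma logOneSubRemainder_div_le {α a c : ℝ} (hα : 0 ≤ α) (hαa : α ≤ a) (ha : a < 1)
    (hc : 1 ≤ c) : logOneSubRemainder (α / c) ≤ α ^ 5 / (5 * (1 - a)) := by
  have hx : α / c ≤ α := div_le_self hα hc
  calc logOneSubRemainder (α / c) ≤ (α / c) ^ 5 / (5 * (1 - α / c)) :=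
        logOneSubRemainder_le (by positivity) (by linarith)
    _ ≤ α ^ 5 / (5 * (1 - a)) := by
        gcongr
        linarith

lemma logRatioRemainder_div_le {α a c : ℝ} (hα : 0 ≤ α) (hαa : α ≤ a) (ha : a < 1)
    (hc : 1 ≤ c) :
    logRatioRemainder (α / c) ≤ 2 * a ^ 2 / (7 * (1 - a ^ 2)) * α ^ 5 * (1 / c ^ 7) := by
  have hx : α / c ≤ α := div_le_self hα hc
  have hα7 : α ^ 7 ≤ a ^ 2 * α ^ 5 := by
    rw [show α ^ 7 = α ^ 2 * α ^ 5 by ring]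
    gcongr
  calc logRatioRemainder (α / c) ≤ 2 * (α / c) ^ 7 / (7 * (1 - (α / c) ^ 2)) :=
        logRatioRemainder_le (by positivity) (by linarith)
    _ ≤ 2 * (a ^ 2 * α ^ 5 / c ^ 7) / (7 * (1 - a ^ 2)) := by
        rw [div_pow]
        gcongr
        · nlinarith
        · linarith
    _ = 2 * a ^ 2 / (7 * (1 - a ^ 2)) * α ^ 5 * (1 / c ^ 7) := by ring

lemma sum_range_one_div_pow_le_zetaR {p : ℕ} (hp : 1 < p) (M : ℕ) :
    ∑ k ∈ range M, 1 / ((k : ℝ) + 1) ^ p ≤ zetaR p := by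
  have hs : Summable fun n : ℕ => 1 / ((n : ℝ) + 1) ^ p := by
    simpa using (summable_nat_add_iff 1).mpr (Real.summable_one_div_nat_pow.mpr hp)
  simp only [zetaR, rpow_natCast]
  exact hs.sum_le_tsum _ fun i _ => by positivity

lemma sum_quintic_add_logRatioRemainder_le {α a : ℝ} (hα : 0 ≤ α) (hαa : α ≤ a) (ha : a < 1)
    (n : ℕ) :
    ∑ k ∈ range n, (2 * (α / (k + 1)) ^ 5 / 5 + logRatioRemainder (α / (k + 1)))
      ≤ (2 / 5 * zetaR 5 + 2 * a ^ 2 / (7 * (1 - a ^ 2)) * zetaR 7) * α ^ 5 := by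
  set C := 2 * a ^ 2 / (7 * (1 - a ^ 2))
  have hC : 0 ≤ C := div_nonneg (by positivity) (by nlinarith)
  have hk : ∀ k : ℕ, (1 : ℝ) ≤ k + 1 := fun k => by linarith [k.cast_nonneg (α := ℝ)]
  calc ∑ k ∈ range n, (2 * (α / (k + 1)) ^ 5 / 5 + logRatioRemainder (α / (k + 1)))
      ≤ ∑ k ∈ range n,
          (2 / 5 * α ^ 5 * (1 / ((k : ℝ) + 1) ^ 5) + C * α ^ 5 * (1 / ((k : ℝ) + 1) ^ 7)) := by
        refine sum_le_sum fun k _ =>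
          add_le_add (le_of_eq ?_) (logRatioRemainder_div_le hα hαa ha (hk k))
        rw [div_pow]
        ring
    _ = 2 / 5 * α ^ 5 * ∑ k ∈ range n, 1 / ((k : ℝ) + 1) ^ 5
          + C * α ^ 5 * ∑ k ∈ range n, 1 / ((k : ℝ) + 1) ^ 7 := by
        rw [sum_add_distrib, mul_sum, mul_sum]
    _ ≤ 2 / 5 * α ^ 5 * zetaR 5 + C * α ^ 5 * zetaR 7 := by
        gcongr
        · exact_mod_cast sum_range_one_div_pow_le_zetaR (p := 5) (by norm_num) n
        · exact_mod_cast sum_range_one_div_pow_le_zetaR (p := 7) (by norm_num) n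
    _ = (2 / 5 * zetaR 5 + C * zetaR 7) * α ^ 5 := by ring

lemma log_gamma_ratio_sub_expansion_eq {α : ℝ} (hα : |α| < 1) {m : ℕ} (hm : 1 ≤ m) :
    log (((m : ℝ) / ((m : ℝ) - α)) * (Gamma (1 - α) / Gamma (1 + α)) *
          (Gamma ((m : ℝ) + α) / Gamma ((m : ℝ) - α)))
        - ((2 * harmonicR (m - 1) + 1 / (m : ℝ)) * α
            + α ^ 2 / (2 * (m : ℝ) ^ 2)
            + ((2 / 3) * harmonic3R (m - 1) + 1 / (3 * (m : ℝ) ^ 3)) * α ^ 3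
            + α ^ 4 / (4 * (m : ℝ) ^ 4))
      = logOneSubRemainder (α / m)
        + ∑ k ∈ range (m - 1), (2 * (α / (k + 1)) ^ 5 / 5 + logRatioRemainder (α / (k + 1))) := by
  obtain ⟨n, rfl⟩ := Nat.exists_eq_add_of_le' hm
  simp only [Nat.add_sub_cancel, Nat.cast_add, Nat.cast_one]
  rw [log_gamma_ratio_eq_sum hα n]
  have hterm : ∀ k ∈ range n, 2 * (α / (k + 1)) ^ 5 / 5 + logRatioRemainder (α / (k + 1))
      = (log (1 + α / (k + 1)) - log (1 - α / (k + 1)))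
        - (2 * α * (1 / ((k : ℝ) + 1)) + 2 / 3 * α ^ 3 * (1 / ((k : ℝ) + 1) ^ 3)) := by
    intro k _
    rw [logRatioRemainder, div_pow, div_pow]
    ring
  rw [sum_congr rfl hterm]
  simp only [sum_sub_distrib, sum_add_distrib, ← mul_sum, logOneSubRemainder, harmonicR, harmonic3R]
  have hn : (n : ℝ) + 1 ≠ 0 := by positivity
  field_simp
  ring

/-- Expansion of `log u_m(α)` up to order `α⁴` with explicit remainder constant
`L₅ = 4/19 + (2/5)ζ(5) + 4ζ(7)α₀²/(7(1−α₀²))` at `α₀ = 1/20`. -/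
theorem stmt9 (m : ℕ) (hm : 1 ≤ m) (α : ℝ) (h0 : 0 ≤ α) (h1 : α ≤ 1 / 20) :
    |Real.log (((m : ℝ) / ((m : ℝ) - α)) * (Real.Gamma (1 - α) / Real.Gamma (1 + α)) *
          (Real.Gamma ((m : ℝ) + α) / Real.Gamma ((m : ℝ) - α)))
        - ((2 * harmonicR (m - 1) + 1 / (m : ℝ)) * α
            + α ^ 2 / (2 * (m : ℝ) ^ 2)
            + ((2 / 3) * harmonic3R (m - 1) + 1 / (3 * (m : ℝ) ^ 3)) * α ^ 3
            + α ^ 4 / (4 * (m : ℝ) ^ 4))|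
      ≤ (4 / 19 + (2 / 5) * zetaR 5
            + 4 * zetaR 7 * (1 / 20 : ℝ) ^ 2 / (7 * (1 - (1 / 20 : ℝ) ^ 2))) * α ^ 5 := by
  have ha : (1 / 20 : ℝ) < 1 := by norm_num
  have hmR : (1 : ℝ) ≤ m := by exact_mod_cast hm
  have hx : ∀ c : ℝ, 1 ≤ c → 0 ≤ α / c ∧ α / c < 1 := fun c hc =>
    ⟨by positivity, (div_le_self h0 hc).trans_lt (by linarith)⟩
  have hk : ∀ k : ℕ, (1 : ℝ) ≤ k + 1 := fun k => by linarith [k.cast_nonneg (α := ℝ)]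
  -- the argument gives `2 ζ(7)` where the bound has `4 ζ(7)`
  have hζ7 : 0 ≤ zetaR 7 := tsum_nonneg fun n => by positivity
  rw [log_gamma_ratio_sub_expansion_eq (abs_lt.mpr ⟨by linarith, by linarith⟩) hm, abs_of_nonneg]
  · calc _ ≤ α ^ 5 / (5 * (1 - 1 / 20)) + (2 / 5 * zetaR 5
            + 2 * (1 / 20) ^ 2 / (7 * (1 - (1 / 20) ^ 2)) * zetaR 7) * α ^ 5 :=
          add_le_add (logOneSubRemainder_div_le h0 h1 ha hmR)
            (sum_quintic_add_logRatioRemainder_le h0 h1 ha (m - 1))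
      _ ≤ _ := by
          norm_num
          linarith [mul_nonneg hζ7 (pow_nonneg h0 5)]
  · exact add_nonneg (logOneSubRemainder_nonneg (hx m hmR).1 (hx m hmR).2)
      (sum_nonneg fun k _ => add_nonneg (by positivity)
        (logRatioRemainder_nonneg (hx _ (hk k)).1 (hx _ (hk k)).2))
end

section
/- Let α₀ be a real number with 0 < α₀ < 1/4 and set β := 1 − 2α₀ and γ := 2 − 2α₀. Then the double series ∑ 1/(|m|^{γ+1} |p|^{γ} |m − p|^{β}), taken over all pairs of nonzero integers m, p with m ≠ p, converges and is at most 4 ζ(γ + 1) √(ζ(2γ) ζ(2β)). -/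
/-!
For fixed `m`, Cauchy–Schwarz in `p` bounds `∑_p |p|^{-γ} |m - p|^{-β}` by
`√(∑_p |p|^{-2γ}) √(∑_p |m - p|^{-2β}) = 2 √(ζ(2γ) ζ(2β))`, uniformly in `m` since the second
sum is invariant under the shift `p ↦ m - p`. Summing the remaining weight `|m|^{-(γ+1)}` over
`m ≠ 0` gives the factor `2 ζ(γ + 1)`. Since `|x|^{-s} = 0` at `x = 0` for `s ≠ 0`, all sums can
be taken over the whole of `ℤ`.
-/

open Real

theorem hasSum_abs_int_rpow_neg {s : ℝ} (hs : 1 < s) :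
    HasSum (fun n : ℤ => |(n : ℝ)| ^ (-s)) (2 * zetaR s) := by
  have hsum := summable_abs_int_rpow hs
  convert hsum.hasSum using 1
  rw [tsum_int_eq_zero_add_two_mul_tsum_pnat (fun n => by simp) hsum,
    tsum_pnat_eq_tsum_succ (f := fun n : ℕ => |((n : ℤ) : ℝ)| ^ (-s))]
  simp only [zetaR, Nat.cast_add, Nat.cast_one, Int.cast_add, Int.cast_natCast, Int.cast_one,
    Int.cast_zero, abs_zero, zero_rpow (by linarith : -s ≠ 0), zero_add]
  rw [nsmul_eq_mul, Nat.cast_ofNat]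
  congr 1
  exact tsum_congr fun n => by
    rw [abs_of_nonneg (by positivity), rpow_neg (by positivity), one_div]

theorem summable_and_tsum_mul_abs_sub_rpow_neg_le {a b : ℝ} (ha : 1 < 2 * a) (hb : 1 < 2 * b)
    (m : ℤ) :
    Summable (fun p : ℤ => |(p : ℝ)| ^ (-a) * |(m - p : ℝ)| ^ (-b)) ∧
    ∑' p : ℤ, |(p : ℝ)| ^ (-a) * |(m - p : ℝ)| ^ (-b) ≤ 2 * √(zetaR (2 * a) * zetaR (2 * b)) := by
  have hsq : ∀ x c : ℝ, (|x| ^ (-c)) ^ (2 : ℝ) = |x| ^ (-(2 * c)) := fun x c => by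
    rw [← rpow_mul (abs_nonneg x)]; ring_nf
  have hA := hasSum_abs_int_rpow_neg ha
  have hB : HasSum (fun p : ℤ => |(m - p : ℝ)| ^ (-(2 * b))) (2 * zetaR (2 * b)) := by
    exact_mod_cast (Equiv.subLeft m).hasSum_iff.mpr (hasSum_abs_int_rpow_neg hb)
  obtain ⟨hsum, hle⟩ := summable_and_inner_le_Lp_mul_Lq_tsum_of_nonneg HolderConjugate.two_two
    (f := fun p : ℤ => |(p : ℝ)| ^ (-a)) (g := fun p : ℤ => |(m - p : ℝ)| ^ (-b))
    (fun _ => by positivity) (fun _ => by positivity)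
    (by simpa only [hsq] using hA.summable) (by simpa only [hsq] using hB.summable)
  refine ⟨hsum, hle.trans_eq ?_⟩
  have hζ : ∀ s, 0 ≤ zetaR s := fun s => tsum_nonneg fun n => by positivity
  simp only [hsq, hA.tsum_eq, hB.tsum_eq, ← sqrt_eq_rpow]
  rw [← sqrt_mul (mul_nonneg zero_le_two (hζ _)), show 2 * zetaR (2 * a) * (2 * zetaR (2 * b)) =
    2 ^ 2 * (zetaR (2 * a) * zetaR (2 * b)) by ring, sqrt_mul (by positivity), sqrt_sq zero_le_two]

theorem summable_and_tsum_prod_le_of_nonneg {α β : Type*} {f : α × β → ℝ} {u : α → ℝ}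
    (hf : 0 ≤ f) (hfib : ∀ a, Summable fun b => f (a, b)) (hle : ∀ a, ∑' b, f (a, b) ≤ u a)
    (hu : Summable u) :
    Summable f ∧ ∑' q, f q ≤ ∑' a, u a := by
  have hrows : Summable fun a => ∑' b, f (a, b) :=
    hu.of_nonneg_of_le (fun a => tsum_nonneg fun b => hf _) hle
  have hsum : Summable f := (summable_prod_of_nonneg hf).mpr ⟨hfib, hrows⟩
  exact ⟨hsum, (hsum.tsum_prod' hfib).trans_le (hrows.tsum_le_tsum hle hu)⟩

theorem summable_and_tsum_abs_rpow_neg_prod_le {γ β : ℝ} (hγ : 1 < 2 * γ) (hβ : 1 < 2 * β) :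
    Summable (fun q : ℤ × ℤ =>
      |(q.1 : ℝ)| ^ (-(γ + 1)) * (|(q.2 : ℝ)| ^ (-γ) * |(q.1 - q.2 : ℝ)| ^ (-β))) ∧
    ∑' q : ℤ × ℤ, |(q.1 : ℝ)| ^ (-(γ + 1)) * (|(q.2 : ℝ)| ^ (-γ) * |(q.1 - q.2 : ℝ)| ^ (-β))
      ≤ 4 * zetaR (γ + 1) * √(zetaR (2 * γ) * zetaR (2 * β)) := by
  have hfib := summable_and_tsum_mul_abs_sub_rpow_neg_le hγ hβ
  have hu := (hasSum_abs_int_rpow_neg (by linarith : 1 < γ + 1)).mul_right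
    (2 * √(zetaR (2 * γ) * zetaR (2 * β)))
  obtain ⟨hsum, hle⟩ := summable_and_tsum_prod_le_of_nonneg
    (f := fun q : ℤ × ℤ =>
      |(q.1 : ℝ)| ^ (-(γ + 1)) * (|(q.2 : ℝ)| ^ (-γ) * |(q.1 - q.2 : ℝ)| ^ (-β)))
    (fun _ => by positivity)
    (fun m => (hfib m).1.mul_left (|(m : ℝ)| ^ (-(γ + 1))))
    (fun m => tsum_mul_left.trans_le <| mul_le_mul_of_nonneg_left (hfib m).2 <|
      rpow_nonneg (abs_nonneg (m : ℝ)) _)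
    hu.summable
  exact ⟨hsum, hle.trans_eq (by rw [hu.tsum_eq]; ring)⟩

theorem stmt12_general (α₀ : ℝ) (h1 : α₀ < 1 / 4) :
    Summable (fun q : {q : ℤ × ℤ // q.1 ≠ 0 ∧ q.2 ≠ 0 ∧ q.1 ≠ q.2} =>
        1 / (|(q.1.1 : ℝ)| ^ ((2 - 2 * α₀) + 1) * |(q.1.2 : ℝ)| ^ (2 - 2 * α₀) *
            |(q.1.1 : ℝ) - (q.1.2 : ℝ)| ^ (1 - 2 * α₀))) ∧
      ∑' q : {q : ℤ × ℤ // q.1 ≠ 0 ∧ q.2 ≠ 0 ∧ q.1 ≠ q.2},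
          1 / (|(q.1.1 : ℝ)| ^ ((2 - 2 * α₀) + 1) * |(q.1.2 : ℝ)| ^ (2 - 2 * α₀) *
              |(q.1.1 : ℝ) - (q.1.2 : ℝ)| ^ (1 - 2 * α₀))
        ≤ 4 * zetaR ((2 - 2 * α₀) + 1) *
            Real.sqrt (zetaR (2 * (2 - 2 * α₀)) * zetaR (2 * (1 - 2 * α₀))) := by
  set γ := 2 - 2 * α₀
  set β := 1 - 2 * α₀
  obtain ⟨hsum, hle⟩ :=
    summable_and_tsum_abs_rpow_neg_prod_le (γ := γ) (β := β) (by linarith) (by linarith)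
  set F := fun q : ℤ × ℤ =>
    |(q.1 : ℝ)| ^ (-(γ + 1)) * (|(q.2 : ℝ)| ^ (-γ) * |(q.1 - q.2 : ℝ)| ^ (-β))
  have hF (q : ℤ × ℤ) : 1 / (|(q.1 : ℝ)| ^ (γ + 1) * |(q.2 : ℝ)| ^ γ *
      |(q.1 : ℝ) - (q.2 : ℝ)| ^ β) = F q := by
    simp only [F, rpow_neg (abs_nonneg _)]; ring
  have hsupp : Function.support F ⊆ {q | q.1 ≠ 0 ∧ q.2 ≠ 0 ∧ q.1 ≠ q.2} := by
    intro q hq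
    refine ⟨fun h => hq ?_, fun h => hq ?_, fun h => hq ?_⟩ <;>
      simp [F, h, zero_rpow, show γ ≠ 0 by linarith, show β ≠ 0 by linarith,
        show -1 + -γ ≠ 0 by linarith]
  simp only [hF]
  exact ⟨hsum.subtype _, (tsum_subtype_eq_of_support_subset hsupp).trans_le hle⟩

/-- An `ℓ²` bound: for `0 < α₀ < 1/4`, `β = 1−2α₀`, `γ = 2−2α₀`,
`∑_{m≠p, m,p≠0} 1/(|m|^{γ+1}|p|^γ|m−p|^β) ≤ 4ζ(γ+1)√(ζ(2γ)ζ(2β))`. -/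
theorem stmt12 (α₀ : ℝ) (h0 : 0 < α₀) (h1 : α₀ < 1 / 4) :
    Summable (fun q : {q : ℤ × ℤ // q.1 ≠ 0 ∧ q.2 ≠ 0 ∧ q.1 ≠ q.2} =>
        1 / (|(q.1.1 : ℝ)| ^ ((2 - 2 * α₀) + 1) * |(q.1.2 : ℝ)| ^ (2 - 2 * α₀) *
            |(q.1.1 : ℝ) - (q.1.2 : ℝ)| ^ (1 - 2 * α₀))) ∧
      ∑' q : {q : ℤ × ℤ // q.1 ≠ 0 ∧ q.2 ≠ 0 ∧ q.1 ≠ q.2},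
          1 / (|(q.1.1 : ℝ)| ^ ((2 - 2 * α₀) + 1) * |(q.1.2 : ℝ)| ^ (2 - 2 * α₀) *
              |(q.1.1 : ℝ) - (q.1.2 : ℝ)| ^ (1 - 2 * α₀))
        ≤ 4 * zetaR ((2 - 2 * α₀) + 1) *
            Real.sqrt (zetaR (2 * (2 - 2 * α₀)) * zetaR (2 * (1 - 2 * α₀))) :=
  stmt12_general α₀ h1
end

section
/- Let α₀ be a real number with 0 < α₀ < 1/4 and set β := 1 − 2α₀ and γ := 2 − 2α₀. For each nonzero integer ℓ define F_ℓ := ∑_{m ∈ ℤ, m ≠ 0, m ≠ ℓ} 1/(|m|^{γ} |m − ℓ|^{β}). Then ∑_{ℓ ∈ ℤ, ℓ ≠ 0} F_ℓ² ≤ 8 ζ(γ)² ζ(2β), and consequently ∑_{ℓ ∈ ℤ, ℓ ≠ 0} F_ℓ²/|ℓ| ≤ 8 ζ(γ)² ζ(2β). -/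
theorem sq_tsum_mul_le_tsum_mul_tsum_mul_sq {ι : Type*} {w x : ι → ℝ} (hw : ∀ i, 0 ≤ w i)
    (hw_sum : Summable w) (hwx_sum : Summable fun i => w i * x i ^ 2) :
    (∑' i, w i * x i) ^ 2 ≤ (∑' i, w i) * ∑' i, w i * x i ^ 2 := by
  have hwx : Summable fun i => w i * x i := by
    refine .of_norm_bounded (hw_sum.add hwx_sum) fun i => ?_
    rw [norm_mul, Real.norm_of_nonneg (hw i), Real.norm_eq_abs, ← mul_one_add]
    exact mul_le_mul_of_nonneg_left (by nlinarith [sq_abs (x i), abs_nonneg (x i)]) (hw i)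
  refine le_of_tendsto_of_tendsto' (hwx.hasSum.pow 2)
    (Filter.Tendsto.mul hw_sum.hasSum hwx_sum.hasSum)
    fun s => Finset.sum_sq_le_sum_mul_sum_of_sq_le_mul s (fun i _ => hw i)
      (fun i _ => mul_nonneg (hw i) (sq_nonneg (x i))) fun i _ => le_of_eq ?_
  ring

theorem summable_sq_tsum_mul_sub_and_tsum_le {G : Type*} [AddCommGroup G] {a b : G → ℝ}
    (ha : ∀ m, 0 ≤ a m) (ha_sum : Summable a) (hb_sum : Summable fun k => b k ^ 2) :
    Summable (fun ℓ => (∑' m, a m * b (m - ℓ)) ^ 2) ∧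
      ∑' ℓ, (∑' m, a m * b (m - ℓ)) ^ 2 ≤ (∑' m, a m) ^ 2 * ∑' k, b k ^ 2 := by
  let shear : G × G ≃ G × G :=
    { toFun := fun p => (p.2, p.2 - p.1)
      invFun := fun q => (q.1 - q.2, q.1)
      left_inv := fun p => by simp
      right_inv := fun q => by simp }
  set A := ∑' m, a m
  set K : G × G → ℝ := fun p => a p.2 * b (p.2 - p.1) ^ 2
  have hK : HasSum K (A * ∑' k, b k ^ 2) := by
    have hprod := ha_sum.mul_of_nonneg hb_sum ha fun k => sq_nonneg (b k)
    rw [ha_sum.tsum_mul_tsum hb_sum hprod]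
    exact shear.hasSum_iff.mpr hprod.hasSum
  have hCS : ∀ ℓ, (∑' m, a m * b (m - ℓ)) ^ 2 ≤ A * ∑' m, a m * b (m - ℓ) ^ 2 := fun ℓ =>
    sq_tsum_mul_le_tsum_mul_tsum_mul_sq ha ha_sum (hK.summable.prod_factor ℓ)
  have hG := hK.summable.prod.mul_left A
  refine ⟨.of_nonneg_of_le (fun _ => sq_nonneg _) hCS hG, ?_⟩
  calc ∑' ℓ, (∑' m, a m * b (m - ℓ)) ^ 2
      ≤ ∑' ℓ, A * ∑' m, a m * b (m - ℓ) ^ 2 :=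
        Summable.tsum_le_tsum hCS (.of_nonneg_of_le (fun _ => sq_nonneg _) hCS hG) hG
    _ = A ^ 2 * ∑' k, b k ^ 2 := by
        rw [tsum_mul_left, ← hK.summable.tsum_prod, hK.tsum_eq]; ring

theorem hasSum_one_div_abs_int_rpow {s : ℝ} (hs : 1 < s) :
    HasSum (fun m : ℤ => 1 / |(m : ℝ)| ^ s) (2 * zetaR s) := by
  have hζ : HasSum (fun n : ℕ => 1 / ((n : ℝ) + 1) ^ s) (zetaR s) := by
    refine Summable.hasSum ?_
    simpa using (summable_nat_add_iff 1).mpr (Real.summable_one_div_nat_rpow.mpr hs)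
  have hpos : HasSum (fun n : ℕ => 1 / |((n + 1 : ℤ) : ℝ)| ^ s) (zetaR s) := by
    convert hζ using 4 with n
    push_cast
    exact abs_of_pos n.cast_add_one_pos
  have hneg : HasSum (fun n : ℕ => 1 / |((-(n + 1) : ℤ) : ℝ)| ^ s) (zetaR s) := by
    convert hζ using 4 with n
    push_cast
    rw [abs_neg]
    exact abs_of_pos n.cast_add_one_pos
  convert HasSum.of_add_one_of_neg_add_one (f := fun m : ℤ => 1 / |(m : ℝ)| ^ s) hpos hneg using 1
  simp [Real.zero_rpow (zero_lt_one.trans hs).ne']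
  ring

theorem one_div_abs_rpow_sq (x β : ℝ) : (1 / |x| ^ β) ^ 2 = 1 / |x| ^ (2 * β) := by
  rw [div_pow, one_pow, ← Real.rpow_natCast, ← Real.rpow_mul (abs_nonneg x), mul_comm]
  norm_num

/- The excluded terms `m = 0` and `m = ℓ` vanish anyway: `|0| ^ γ = 0` for `γ ≠ 0`, and
`1 / 0 = 0`. -/
theorem tsum_ne_zero_ne_eq_tsum_int {γ β : ℝ} (hγ : γ ≠ 0) (hβ : β ≠ 0) (ℓ : ℤ) :
    ∑' m : {m : ℤ // m ≠ 0 ∧ m ≠ ℓ}, 1 / (|(m.1 : ℝ)| ^ γ * |(m.1 : ℝ) - (ℓ : ℝ)| ^ β)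
      = ∑' m : ℤ, 1 / |(m : ℝ)| ^ γ * (1 / |((m - ℓ : ℤ) : ℝ)| ^ β) := by
  have hsupp : Function.support (fun m : ℤ => 1 / |(m : ℝ)| ^ γ * (1 / |((m - ℓ : ℤ) : ℝ)| ^ β))
      ⊆ {m | m ≠ 0 ∧ m ≠ ℓ} := by
    intro m hm
    refine ⟨fun h => hm ?_, fun h => hm ?_⟩ <;> simp [h, Real.zero_rpow, hγ, hβ]
  rw [← tsum_subtype_eq_of_support_subset hsupp]
  refine tsum_congr fun m => ?_
  rw [one_div_mul_one_div, Int.cast_sub]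

theorem summable_div_abs_and_tsum_le {f : {ℓ : ℤ // ℓ ≠ 0} → ℝ} (hf0 : ∀ ℓ, 0 ≤ f ℓ)
    (hf : Summable f) :
    Summable (fun ℓ => f ℓ / |(ℓ.1 : ℝ)|) ∧ ∑' ℓ, f ℓ / |(ℓ.1 : ℝ)| ≤ ∑' ℓ, f ℓ := by
  have hle : ∀ ℓ : {ℓ : ℤ // ℓ ≠ 0}, f ℓ / |(ℓ.1 : ℝ)| ≤ f ℓ := fun ℓ =>
    div_le_self (hf0 ℓ) (by exact_mod_cast Int.one_le_abs ℓ.2)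
  have hsum := hf.of_nonneg_of_le (fun ℓ => div_nonneg (hf0 ℓ) (abs_nonneg _)) hle
  exact ⟨hsum, hsum.tsum_le_tsum hle hf⟩

/-- An `ℓ²` bound for the fully off-diagonal kernel: for `0 < α₀ < 1/4`,
`β = 1−2α₀`, `γ = 2−2α₀`, and
`F_ℓ = ∑_{m≠0, m≠ℓ} 1/(|m|^γ |m−ℓ|^β)`, one has
`∑_{ℓ≠0} F_ℓ² ≤ 8ζ(γ)²ζ(2β)` and consequently `∑_{ℓ≠0} F_ℓ²/|ℓ| ≤ 8ζ(γ)²ζ(2β)`. -/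
theorem stmt13 (α₀ : ℝ) (h0 : 0 < α₀) (h1 : α₀ < 1 / 4) :
    (Summable (fun ℓ : {ℓ : ℤ // ℓ ≠ 0} =>
        (∑' m : {m : ℤ // m ≠ 0 ∧ m ≠ ℓ.1},
            1 / (|(m.1 : ℝ)| ^ (2 - 2 * α₀) * |(m.1 : ℝ) - (ℓ.1 : ℝ)| ^ (1 - 2 * α₀))) ^ 2) ∧
      ∑' ℓ : {ℓ : ℤ // ℓ ≠ 0},
          (∑' m : {m : ℤ // m ≠ 0 ∧ m ≠ ℓ.1},
              1 / (|(m.1 : ℝ)| ^ (2 - 2 * α₀) * |(m.1 : ℝ) - (ℓ.1 : ℝ)| ^ (1 - 2 * α₀))) ^ 2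
        ≤ 8 * zetaR (2 - 2 * α₀) ^ 2 * zetaR (2 * (1 - 2 * α₀))) ∧
    (Summable (fun ℓ : {ℓ : ℤ // ℓ ≠ 0} =>
        (∑' m : {m : ℤ // m ≠ 0 ∧ m ≠ ℓ.1},
            1 / (|(m.1 : ℝ)| ^ (2 - 2 * α₀) * |(m.1 : ℝ) - (ℓ.1 : ℝ)| ^ (1 - 2 * α₀))) ^ 2
          / |(ℓ.1 : ℝ)|) ∧
      ∑' ℓ : {ℓ : ℤ // ℓ ≠ 0},
          (∑' m : {m : ℤ // m ≠ 0 ∧ m ≠ ℓ.1},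
              1 / (|(m.1 : ℝ)| ^ (2 - 2 * α₀) * |(m.1 : ℝ) - (ℓ.1 : ℝ)| ^ (1 - 2 * α₀))) ^ 2
            / |(ℓ.1 : ℝ)|
        ≤ 8 * zetaR (2 - 2 * α₀) ^ 2 * zetaR (2 * (1 - 2 * α₀))) := by
  have hγ : 1 < 2 - 2 * α₀ := by linarith
  have hβ : 1 < 2 * (1 - 2 * α₀) := by linarith
  simp only [tsum_ne_zero_ne_eq_tsum_int (by linarith : 2 - 2 * α₀ ≠ 0)
    (by linarith : 1 - 2 * α₀ ≠ 0)]
  have hb : Summable fun k : ℤ => (1 / |(k : ℝ)| ^ (1 - 2 * α₀)) ^ 2 := by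
    simpa only [one_div_abs_rpow_sq] using (hasSum_one_div_abs_int_rpow hβ).summable
  obtain ⟨hF, hF_le⟩ := summable_sq_tsum_mul_sub_and_tsum_le (fun m => by positivity)
    (hasSum_one_div_abs_int_rpow hγ).summable hb
  simp only [one_div_abs_rpow_sq, (hasSum_one_div_abs_int_rpow hγ).tsum_eq,
    (hasSum_one_div_abs_int_rpow hβ).tsum_eq] at hF_le
  have hF_sub := (hF.tsum_subtype_le _ {ℓ | ℓ ≠ 0} fun _ => sq_nonneg _).trans
    (hF_le.trans_eq (by ring : _ = 8 * zetaR (2 - 2 * α₀) ^ 2 * zetaR (2 * (1 - 2 * α₀))))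
  obtain ⟨hF_div, hF_div_le⟩ := summable_div_abs_and_tsum_le (fun _ => sq_nonneg _) (hF.subtype _)
  exact ⟨⟨hF.subtype _, hF_sub⟩, hF_div, hF_div_le.trans hF_sub⟩
end

section
/- Let H be a complex Hilbert space, let K : H → H be a bounded self-adjoint operator, let b ∈ H, let a₀₀ ∈ ℝ, and let λ ∈ ℝ with λ not in the spectrum of K. On the Hilbert space ℂ × H (with inner product ⟨(x₀, y), (x₀', y')⟩ = x₀ · conj(x₀') + ⟨y, y'⟩), define the bounded linear operator A by A(x₀, y) := (a₀₀ x₀ + ⟨y, b⟩, x₀ b + K y). Then A has a nonzero vector v with A v = λ v if and only if λ − a₀₀ − ⟨(λI − K)^{−1} b, b⟩ = 0; and in that case the set of solutions v of A v = λ v is exactly the one-dimensional subspace spanned by (1, (λI − K)^{−1} b). -/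
/-!
Solve `A v = λ v` blockwise. Since `λ - K` is invertible, the second row `x₀ b + K y = λ y`
forces `y = x₀ (λ - K)⁻¹ b`; substituting into the first row leaves the scalar equation
`x₀ (λ - a₀₀ - ⟨(λ - K)⁻¹ b, b⟩) = 0` for the Schur complement. A nonzero solution needs `x₀ ≠ 0`,
and when the Schur complement vanishes every `x₀` works, giving the line through `(1, (λ - K)⁻¹ b)`.
-/

theorem IsUnit.apply_eq_iff_eq_inverse_apply {F α : Type*} [MonoidWithZero F] [FunLike F α α]
    [IsMulApplyEqComp F α] [IsOneApplyEqSelf F α] {L : F} (hL : IsUnit L) (y z : α) :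
    L y = z ↔ y = Ring.inverse L z := by
  constructor
  · rintro rfl
    rw [← mul_apply_eq_comp, Ring.inverse_mul_cancel _ hL, one_apply_eq_self]
  · rintro rfl
    rw [← mul_apply_eq_comp, Ring.mul_inverse_cancel _ hL, one_apply_eq_self]

theorem Submodule.mem_span_singleton_one_mk_iff {R M : Type*} [Semiring R] [AddCommMonoid M]
    [Module R M] (w : M) (v : R × M) :
    v ∈ Submodule.span R {((1 : R), w)} ↔ v.2 = v.1 • w := by
  rw [Submodule.mem_span_singleton]
  constructor
  · rintro ⟨c, rfl⟩
    simp
  · intro h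
    exact ⟨v.1, Prod.ext (mul_one _) h.symm⟩

theorem spectrum.isUnit_smul_one_sub_of_notMem {R A : Type*} [CommSemiring R] [Ring A]
    [Algebra R A] {μ : R} {a : A} (h : μ ∉ spectrum R a) : IsUnit (μ • (1 : A) - a) := by
  rw [← Algebra.algebraMap_eq_smul_one]
  exact spectrum.notMem_iff.mp h

theorem smul_add_apply_eq_smul_iff {𝕜 E : Type*} [NormedField 𝕜] [NormedAddCommGroup E]
    [NormedSpace 𝕜 E] {K : E →L[𝕜] E} {μ : 𝕜} (hK : IsUnit (μ • (1 : E →L[𝕜] E) - K))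
    (c : 𝕜) (b y : E) :
    c • b + K y = μ • y ↔ y = c • Ring.inverse (μ • (1 : E →L[𝕜] E) - K) b := by
  rw [← map_smul, ← hK.apply_eq_iff_eq_inverse_apply, sub_apply, smul_apply, one_apply_eq_self,
    sub_eq_iff_eq_add, eq_comm, add_comm]

theorem bordered_eq_smul_iff {𝕜 E : Type*} [RCLike 𝕜] [NormedAddCommGroup E]
    [InnerProductSpace 𝕜 E] {K : E →L[𝕜] E} {μ : 𝕜} (hK : IsUnit (μ • (1 : E →L[𝕜] E) - K))
    (a : 𝕜) (b : E) (v : 𝕜 × E) :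
    (a * v.1 + inner 𝕜 b v.2, v.1 • b + K v.2) = μ • v ↔
      v.2 = v.1 • Ring.inverse (μ • (1 : E →L[𝕜] E) - K) b ∧
        v.1 * (μ - a - inner 𝕜 b (Ring.inverse (μ • (1 : E →L[𝕜] E) - K) b)) = 0 := by
  rw [Prod.ext_iff, Prod.smul_fst, Prod.smul_snd, smul_add_apply_eq_smul_iff hK, and_comm]
  refine and_congr_right fun hy => ?_
  rw [hy, inner_smul_right, smul_eq_mul]
  constructor <;> intro h <;> linear_combination -h

theorem stmt14_general {H : Type*} [NormedAddCommGroup H] [InnerProductSpace ℂ H]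
    (K : H →L[ℂ] H) (b : H)
    (a₀₀ : ℝ) (lam : ℝ) (hlam : (lam : ℂ) ∉ spectrum ℂ K) :
    ((∃ v : ℂ × H, v ≠ 0 ∧
        ((a₀₀ : ℂ) * v.1 + (inner ℂ b v.2 : ℂ), v.1 • b + K v.2) = (lam : ℂ) • v) ↔
      (lam : ℂ) - (a₀₀ : ℂ)
          - (inner ℂ b ((Ring.inverse ((lam : ℂ) • (1 : H →L[ℂ] H) - K)) b) : ℂ) = 0) ∧
    ((lam : ℂ) - (a₀₀ : ℂ)
          - (inner ℂ b ((Ring.inverse ((lam : ℂ) • (1 : H →L[ℂ] H) - K)) b) : ℂ) = 0 →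
      {v : ℂ × H | ((a₀₀ : ℂ) * v.1 + (inner ℂ b v.2 : ℂ), v.1 • b + K v.2) = (lam : ℂ) • v}
        = (Submodule.span ℂ
            {((1 : ℂ), (Ring.inverse ((lam : ℂ) • (1 : H →L[ℂ] H) - K)) b)} : Set (ℂ × H))) := by
  have hK := spectrum.isUnit_smul_one_sub_of_notMem hlam
  refine ⟨⟨?_, fun hs => ?_⟩, fun hs => ?_⟩
  · rintro ⟨v, hv0, hv⟩
    obtain ⟨hy, hs⟩ := (bordered_eq_smul_iff hK _ _ _).mp hv
    have hx : v.1 ≠ 0 := fun hx => hv0 (Prod.ext hx (by rw [hy, hx, zero_smul]; rfl))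
    exact (mul_eq_zero.mp hs).resolve_left hx
  · refine ⟨(1, _), by simp, (bordered_eq_smul_iff hK _ _ _).mpr ⟨(one_smul ℂ _).symm, ?_⟩⟩
    rw [one_mul, hs]
  · ext v
    rw [Set.mem_ofPred_eq, bordered_eq_smul_iff hK, SetLike.mem_coe,
      Submodule.mem_span_singleton_one_mk_iff, hs, mul_zero]
    exact and_iff_left rfl

/-- Schur complement criterion. On `ℂ × H`, with `A(x₀,y) = (a₀₀x₀ + ⟨y,b⟩, x₀b + Ky)`
(inner products linear in the first argument, i.e. `⟨y,b⟩ = ⟪b,y⟫` in Mathlib's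
convention), and `λ ∉ spec(K)`, the equation `Av = λv` has a nonzero solution iff
`λ − a₀₀ − ⟨(λI−K)⁻¹b, b⟩ = 0`, in which case the solution set is exactly the
span of `(1, (λI−K)⁻¹b)`. -/
theorem stmt14 {H : Type*} [NormedAddCommGroup H] [InnerProductSpace ℂ H]
    [CompleteSpace H] (K : H →L[ℂ] H) (hK : IsSelfAdjoint K) (b : H)
    (a₀₀ : ℝ) (lam : ℝ) (hlam : (lam : ℂ) ∉ spectrum ℂ K) :
    ((∃ v : ℂ × H, v ≠ 0 ∧
        ((a₀₀ : ℂ) * v.1 + (inner ℂ b v.2 : ℂ), v.1 • b + K v.2) = (lam : ℂ) • v) ↔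
      (lam : ℂ) - (a₀₀ : ℂ)
          - (inner ℂ b ((Ring.inverse ((lam : ℂ) • (1 : H →L[ℂ] H) - K)) b) : ℂ) = 0) ∧
    ((lam : ℂ) - (a₀₀ : ℂ)
          - (inner ℂ b ((Ring.inverse ((lam : ℂ) • (1 : H →L[ℂ] H) - K)) b) : ℂ) = 0 →
      {v : ℂ × H | ((a₀₀ : ℂ) * v.1 + (inner ℂ b v.2 : ℂ), v.1 • b + K v.2) = (lam : ℂ) • v}
        = (Submodule.span ℂ
            {((1 : ℂ), (Ring.inverse ((lam : ℂ) • (1 : H →L[ℂ] H) - K)) b)} : Set (ℂ × H))) :=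
  stmt14_general K b a₀₀ lam hlam
end

section
/- Let H be a complex Hilbert space, let K : H → H be a bounded self-adjoint operator with operator norm κ := ‖K‖, and let b ∈ H. Define F(λ) := λ − 1 − ⟨(λI − K)^{−1} b, b⟩ for real λ > κ. Then for every λ > κ, F(λ) is a real number, F is differentiable at λ with F′(λ) = 1 + ⟨(λI − K)^{−2} b, b⟩, this derivative satisfies F′(λ) ≥ 1, and F is strictly increasing on (κ, ∞). -/
/-!
For real `λ` the resolvent `R(λ) = (λI − K)⁻¹` of the self-adjoint `K` is self-adjoint, so
`⟨R(λ)b, b⟩` is real. Differentiating `R(λ)` gives `R'(λ) = −R(λ)²`, hence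
`F'(λ) = 1 + ⟨R(λ)²b, b⟩ = 1 + ‖R(λ)b‖² ≥ 1`, and `F` is strictly increasing by the mean
value theorem.
-/

open spectrum ContinuousLinearMap
open scoped InnerProductSpace

theorem IsSelfAdjoint.resolvent_ofReal {A : Type*} [Ring A] [StarRing A] [Algebra ℂ A]
    [StarModule ℂ A] {a : A} (ha : IsSelfAdjoint a) (t : ℝ) :
    IsSelfAdjoint (resolvent a (t : ℂ)) :=
  ((IsSelfAdjoint.algebraMap A (Complex.conj_ofReal t)).sub ha).ringInverse

theorem ContinuousLinearMap.ofReal_mem_resolventSet_of_norm_lt {E : Type*}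
    [NormedAddCommGroup E] [NormedSpace ℂ E] [CompleteSpace E] {K : E →L[ℂ] E} {t : ℝ}
    (ht : ‖K‖ < t) : (t : ℂ) ∈ resolventSet ℂ K :=
  mem_resolventSet_of_norm_lt_mul <| by
    calc ‖K‖ * ‖(1 : E →L[ℂ] E)‖ ≤ ‖K‖ := mul_le_of_le_one_right (norm_nonneg K) norm_id_le
      _ < ‖(t : ℂ)‖ := by
        rwa [Complex.norm_real, Real.norm_of_nonneg ((norm_nonneg K).trans ht.le)]

theorem HasDerivAt.re_inner_clm_apply {E : Type*} [NormedAddCommGroup E] [InnerProductSpace ℂ E]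
    {T : ℝ → E →L[ℂ] E} {T' : E →L[ℂ] E} {t : ℝ} (hT : HasDerivAt T T' t) (x y : E) :
    HasDerivAt (fun s => (⟪x, T s y⟫_ℂ).re) (⟪x, T' y⟫_ℂ).re t := by
  let L : (E →L[ℂ] E) →L[ℝ] ℝ :=
    Complex.reCLM ∘L ((innerSL ℂ x ∘L apply ℂ E y).restrictScalars ℝ)
  exact L.hasFDerivAt.comp_hasDerivAt t hT

theorem IsSelfAdjoint.re_inner_sq_apply_nonneg {E : Type*} [NormedAddCommGroup E]
    [InnerProductSpace ℂ E] [CompleteSpace E] {S : E →L[ℂ] E} (hS : IsSelfAdjoint S) (x : E) :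
    0 ≤ (⟪x, (S ^ 2) x⟫_ℂ).re :=
  ((nonneg_iff_isPositive _).mp hS.sq_nonneg).re_inner_nonneg_right x

theorem hasDerivAt_sub_one_sub_re_inner_resolvent {E : Type*} [NormedAddCommGroup E]
    [InnerProductSpace ℂ E] [CompleteSpace E] {K : E →L[ℂ] E} (b : E) {t : ℝ} (ht : ‖K‖ < t) :
    HasDerivAt (fun s : ℝ => s - 1 - (⟪b, resolvent K (s : ℂ) b⟫_ℂ).re)
      (1 + (⟪b, (resolvent K (t : ℂ) ^ 2) b⟫_ℂ).re) t := by
  have hR : HasDerivAt (fun s : ℝ => resolvent K (s : ℂ)) (-resolvent K (t : ℂ) ^ 2) t := by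
    simpa [Function.comp_def] using (hasDerivAt_resolvent_const_left
      (ofReal_mem_resolventSet_of_norm_lt ht)).scomp t Complex.ofRealCLM.hasDerivAt
  have hF := ((hasDerivAt_id' t).sub_const 1).sub (hR.re_inner_clm_apply b b)
  rwa [neg_apply, inner_neg_right, Complex.neg_re, sub_neg_eq_add] at hF

/-- Monotonicity of the Schur function `F(λ) = λ − 1 − ⟨(λI−K)⁻¹b, b⟩` on `(‖K‖, ∞)`:
the Schur term is real, `F` is differentiable with
`F'(λ) = 1 + ⟨(λI−K)⁻²b, b⟩ ≥ 1`, and `F` is strictly increasing on `(‖K‖, ∞)`. -/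
theorem stmt15 {H : Type*} [NormedAddCommGroup H] [InnerProductSpace ℂ H]
    [CompleteSpace H] (K : H →L[ℂ] H) (hK : IsSelfAdjoint K) (b : H) :
    (∀ lam : ℝ, ‖K‖ < lam →
      (inner ℂ b ((Ring.inverse ((lam : ℂ) • (1 : H →L[ℂ] H) - K)) b) : ℂ).im = 0 ∧
      HasDerivAt (fun t : ℝ => t - 1 -
          (inner ℂ b ((Ring.inverse ((t : ℂ) • (1 : H →L[ℂ] H) - K)) b) : ℂ).re)
        (1 + (inner ℂ b (((Ring.inverse ((lam : ℂ) • (1 : H →L[ℂ] H) - K)) ^ 2) b) : ℂ).re)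
        lam ∧
      1 ≤ 1 + (inner ℂ b (((Ring.inverse ((lam : ℂ) • (1 : H →L[ℂ] H) - K)) ^ 2) b) : ℂ).re) ∧
    StrictMonoOn (fun t : ℝ => t - 1 -
        (inner ℂ b ((Ring.inverse ((t : ℂ) • (1 : H →L[ℂ] H) - K)) b) : ℂ).re)
      (Set.Ioi ‖K‖) := by
  have hR : ∀ z : ℂ, Ring.inverse (z • (1 : H →L[ℂ] H) - K) = resolvent K z := fun z => by
    rw [resolvent, Algebra.algebraMap_eq_smul_one]
  simp only [hR]
  have hF' := fun t (ht : ‖K‖ < t) => hasDerivAt_sub_one_sub_re_inner_resolvent b ht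
  have hF'_nonneg := fun t : ℝ => (hK.resolvent_ofReal t).re_inner_sq_apply_nonneg b
  refine ⟨fun t ht => ⟨(hK.resolvent_ofReal t).isSymmetric.im_inner_self_apply b, hF' t ht,
    le_add_of_nonneg_right (hF'_nonneg t)⟩, ?_⟩
  refine strictMonoOn_of_hasDerivWithinAt_pos (convex_Ioi _)
    (f' := fun t => 1 + (⟪b, (resolvent K (t : ℂ) ^ 2) b⟫_ℂ).re)
    (fun t ht => (hF' t ht).continuousAt.continuousWithinAt) (fun t ht => ?_)
    (fun t _ => by linarith [hF'_nonneg t])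
  rw [interior_Ioi] at ht ⊢
  exact (hF' t ht).hasDerivWithinAt
end

section
/- Let H be a complex Hilbert space, let K : H → H be a bounded self-adjoint operator which is nonnegative (⟨K x, x⟩ ≥ 0 for all x ∈ H) and satisfies ‖K‖ < 1, and let b ∈ H with b ≠ 0. Then there exists a unique real number λ* with λ* > ‖K‖ such that λ* − 1 = ⟨(λ* I − K)^{−1} b, b⟩, and this λ* satisfies λ* > 1. -/
/-!
Write `q(t) = Re ⟨(t I − K)⁻¹ b, b⟩` for real `t > ‖K‖`. Self-adjointness makes the quadratic form
real, so the equation is `t − 1 = q(t)`. Since `t I − K ≥ (t − ‖K‖) I`, `q(t) > 0`, so any root exceeds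
`1`; and `q'(t) = −‖(t I − K)⁻¹ b‖² ≤ 0`, so `t ↦ t − 1 − q(t)` is continuous and increases at
least as fast as `t`. It is negative at `t = 1`, hence nonnegative at `t = 1 + q(1)`, and has exactly
one root.
-/

open Set
open scoped InnerProductSpace

theorem existsUnique_sub_eq_of_antitoneOn {q : ℝ → ℝ} {a c : ℝ} (hac : a < c)
    (hq : AntitoneOn q (Ioi a)) (hcont : ContinuousOn q (Ioi a)) (hqc : 0 ≤ q c) :
    ∃! t, a < t ∧ t - c = q t := by
  have hc : c ∈ Ioi a := hac
  have hle : c ≤ c + q c := le_add_of_nonneg_right hqc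
  have hIcc : Icc c (c + q c) ⊆ Ioi a := fun t ht => hac.trans_le ht.1
  obtain ⟨t, ht, hroot⟩ : ∃ t ∈ Icc c (c + q c), t - c - q t = 0 := by
    have hcont' := hcont.mono hIcc
    refine intermediate_value_Icc (f := fun t => t - c - q t) hle (by fun_prop) ⟨?_, ?_⟩
    · linarith
    · linarith [hq hc (hIcc (right_mem_Icc.2 hle)) hle]
  have root_le : ∀ u v, a < u → u - c = q u → a < v → v - c = q v → u ≤ v := by
    intro u v hu hqu hv hqv
    by_contra! hvu
    linarith [hq hv hu hvu.le]
  refine ⟨t, ⟨hIcc ht, by linarith⟩, fun s ⟨hs, hqs⟩ => ?_⟩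
  exact le_antisymm (root_le s t hs hqs (hIcc ht) (by linarith))
    (root_le t s (hIcc ht) (by linarith) hs hqs)

section ResolventQuadForm

variable {H : Type*} [NormedAddCommGroup H] [InnerProductSpace ℂ H]

theorem algebraMap_sub_apply_resolvent {K : H →L[ℂ] H} {z : ℂ} (hz : z ∈ resolventSet ℂ K)
    (b : H) : (algebraMap ℂ (H →L[ℂ] H) z - K) (resolvent K z b) = b := by
  rw [← mul_apply_eq_comp, resolvent, Ring.mul_inverse_cancel _ hz, one_apply_eq_self]

noncomputable def resolventQuadForm (K : H →L[ℂ] H) (b : H) (t : ℝ) : ℝ :=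
  (⟪b, resolvent K (t : ℂ) b⟫_ℂ).re

variable [CompleteSpace H]

theorem ofReal_mem_resolventSet_of_norm_lt {K : H →L[ℂ] H} {t : ℝ} (h : ‖K‖ < t) :
    (t : ℂ) ∈ resolventSet ℂ K :=
  spectrum.mem_resolventSet_of_norm_lt_mul <| by
    rw [Complex.norm_real, Real.norm_of_nonneg ((norm_nonneg K).trans h.le)]
    exact (mul_le_of_le_one_right (norm_nonneg K) ContinuousLinearMap.norm_id_le).trans_lt h

theorem IsSelfAdjoint.resolvent_ofReal_s16 {K : H →L[ℂ] H} (hK : IsSelfAdjoint K) (t : ℝ) :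
    IsSelfAdjoint (resolvent K (t : ℂ)) :=
  ((IsSelfAdjoint.algebraMap _ (Complex.conj_ofReal t)).sub hK).ringInverse

theorem IsSelfAdjoint.inner_resolvent_ofReal {K : H →L[ℂ] H} (hK : IsSelfAdjoint K) (b : H)
    (t : ℝ) : ⟪b, resolvent K (t : ℂ) b⟫_ℂ = resolventQuadForm K b t :=
  ((hK.resolvent_ofReal_s16 t).isSymmetric.coe_re_inner_self_apply b).symm

theorem resolventQuadForm_pos {K : H →L[ℂ] H} {t : ℝ} (h : ‖K‖ < t) {b : H} (hb : b ≠ 0) :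
    0 < resolventQuadForm K b t := by
  set z := resolvent K (t : ℂ) b
  have hAz : (algebraMap ℂ (H →L[ℂ] H) t - K) z = b :=
    algebraMap_sub_apply_resolvent (ofReal_mem_resolventSet_of_norm_lt h) b
  have hz : 0 < ‖z‖ := norm_pos_iff.2 fun hz => hb (by rw [← hAz, hz, map_zero])
  have hKz : (⟪K z, z⟫_ℂ).re ≤ ‖K‖ * ‖z‖ ^ 2 := calc
    (⟪K z, z⟫_ℂ).re ≤ ‖K z‖ * ‖z‖ := re_inner_le_norm (𝕜 := ℂ) _ _
    _ ≤ ‖K‖ * ‖z‖ * ‖z‖ := by gcongr; exact K.le_opNorm z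
    _ = ‖K‖ * ‖z‖ ^ 2 := by ring
  have hq : resolventQuadForm K b t = t * ‖z‖ ^ 2 - (⟪K z, z⟫_ℂ).re := by
    change (⟪b, z⟫_ℂ).re = _
    rw [← hAz, sub_apply, inner_sub_left, Algebra.algebraMap_eq_smul_one,
      smul_apply, one_apply_eq_self, inner_smul_left, Complex.conj_ofReal,
      Complex.sub_re, Complex.re_ofReal_mul, ← inner_self_eq_norm_sq (𝕜 := ℂ)]
    rfl
  rw [hq]
  nlinarith [pow_pos hz 2]

theorem hasDerivAt_resolventQuadForm {K : H →L[ℂ] H} (hK : IsSelfAdjoint K) {t : ℝ}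
    (h : ‖K‖ < t) (b : H) :
    HasDerivAt (resolventQuadForm K b) (-‖resolvent K (t : ℂ) b‖ ^ 2) t := by
  have hR := spectrum.hasDerivAt_resolvent_const_left (ofReal_mem_resolventSet_of_norm_lt h)
  have := (((innerSL ℂ b).comp (ContinuousLinearMap.apply ℂ H b)).hasFDerivAt.comp_hasDerivAt _
    hR).real_of_complex
  convert this using 1
  · rfl
  · have hsymm := (hK.resolvent_ofReal_s16 t).isSymmetric b (resolvent K (t : ℂ) b)
    simp only [ContinuousLinearMap.coe_coe] at hsymm
    simp [sq, ← hsymm]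

theorem continuousOn_resolventQuadForm {K : H →L[ℂ] H} (hK : IsSelfAdjoint K) (b : H) :
    ContinuousOn (resolventQuadForm K b) (Ioi ‖K‖) := fun _ ht =>
  (hasDerivAt_resolventQuadForm hK ht b).continuousAt.continuousWithinAt

theorem antitoneOn_resolventQuadForm {K : H →L[ℂ] H} (hK : IsSelfAdjoint K) (b : H) :
    AntitoneOn (resolventQuadForm K b) (Ioi ‖K‖) := by
  refine antitoneOn_of_hasDerivWithinAt_nonpos (convex_Ioi _) (continuousOn_resolventQuadForm hK b)
    (fun t ht => ?_) (fun t _ => neg_nonpos.2 (sq_nonneg ‖resolvent K (t : ℂ) b‖))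
  rw [interior_Ioi] at ht ⊢
  exact (hasDerivAt_resolventQuadForm hK ht b).hasDerivWithinAt

end ResolventQuadForm

open scoped ComplexOrder in
theorem stmt16_general {H : Type*} [NormedAddCommGroup H] [InnerProductSpace ℂ H]
    [CompleteSpace H] (K : H →L[ℂ] H) (hK : IsSelfAdjoint K)
    (hnorm : ‖K‖ < 1) (b : H) (hb : b ≠ 0) :
    (∃! lam : ℝ, ‖K‖ < lam ∧
        (lam : ℂ) - 1
          = (inner ℂ b ((Ring.inverse ((lam : ℂ) • (1 : H →L[ℂ] H) - K)) b) : ℂ)) ∧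
    ∀ lam : ℝ, ‖K‖ < lam →
      (lam : ℂ) - 1
          = (inner ℂ b ((Ring.inverse ((lam : ℂ) • (1 : H →L[ℂ] H) - K)) b) : ℂ) →
      1 < lam := by
  have real_eq : ∀ lam : ℝ, (lam : ℂ) - 1
      = inner ℂ b ((Ring.inverse ((lam : ℂ) • (1 : H →L[ℂ] H) - K)) b) ↔
      lam - 1 = resolventQuadForm K b lam := by
    intro lam
    rw [← Algebra.algebraMap_eq_smul_one, ← resolvent, hK.inner_resolvent_ofReal]
    norm_cast
  simp only [real_eq]
  refine ⟨existsUnique_sub_eq_of_antitoneOn hnorm (antitoneOn_resolventQuadForm hK b)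
    (continuousOn_resolventQuadForm hK b) (resolventQuadForm_pos hnorm hb).le, ?_⟩
  intro lam hlam hroot
  linarith [resolventQuadForm_pos hlam hb]

open scoped ComplexOrder in
/-- Existence and uniqueness of the Schur root: if `K` is self-adjoint, nonnegative,
`‖K‖ < 1`, and `b ≠ 0`, there is a unique `λ* > ‖K‖` with
`λ* − 1 = ⟨(λ*I − K)⁻¹ b, b⟩`, and this `λ*` satisfies `λ* > 1`.
(Inner products linear in the first argument: `⟨x,y⟩ = ⟪y,x⟫` in Mathlib's convention.) -/
theorem stmt16 {H : Type*} [NormedAddCommGroup H] [InnerProductSpace ℂ H]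
    [CompleteSpace H] (K : H →L[ℂ] H) (hK : IsSelfAdjoint K)
    (hpos : ∀ x : H, 0 ≤ (inner ℂ x (K x) : ℂ))
    (hnorm : ‖K‖ < 1) (b : H) (hb : b ≠ 0) :
    (∃! lam : ℝ, ‖K‖ < lam ∧
        (lam : ℂ) - 1
          = (inner ℂ b ((Ring.inverse ((lam : ℂ) • (1 : H →L[ℂ] H) - K)) b) : ℂ)) ∧
    ∀ lam : ℝ, ‖K‖ < lam →
      (lam : ℂ) - 1
          = (inner ℂ b ((Ring.inverse ((lam : ℂ) • (1 : H →L[ℂ] H) - K)) b) : ℂ) →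
      1 < lam :=
  stmt16_general K hK hnorm b hb
end

section
/- Let H be a complex Hilbert space, let κ be a real number with 0 ≤ κ < 1, let K : H → H be a bounded self-adjoint operator with 0 ≤ ⟨K x, x⟩ ≤ κ ‖x‖² for all x ∈ H, let b ∈ H, and set β := ‖b‖². Suppose λ is a real number with λ > 1 satisfying λ − 1 = ⟨(λI − K)^{−1} b, b⟩. Then: (i) λ ≥ (1 + √(1 + 4β))/2; (ii) (λ − 1)(λ − κ) ≤ β; and (iii) λ − 1 ≤ β/(1 − κ). -/
/-!
With `T = λ - K` we have `λ - κ ≤ T ≤ λ` in the Loewner order, and inversion is antitone on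
strictly positive operators, so `λ⁻¹ ≤ T⁻¹ ≤ (λ - κ)⁻¹`. Testing against `b` gives
`β / λ ≤ λ - 1 ≤ β / (λ - κ)`: the left inequality is `β ≤ λ (λ - 1)`, which is (i), the
right one is (ii), and (iii) follows from (ii) because `λ - κ ≥ 1 - κ`.
-/

open scoped ComplexOrder InnerProductSpace

theorem ringInverse_algebraMap {𝕜 A : Type*} [Field 𝕜] [Ring A] [Algebra 𝕜 A] (c : 𝕜) :
    Ring.inverse (algebraMap 𝕜 A c) = algebraMap 𝕜 A c⁻¹ := by
  rcases eq_or_ne c 0 with rfl | hc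
  · simp
  · simpa using Ring.inverse_unit ((Units.mk0 c hc).map (algebraMap 𝕜 A).toMonoidHom)

theorem one_add_sqrt_one_add_four_mul_div_two_le {β x : ℝ} (hx : 1 / 2 ≤ x)
    (hβ : β ≤ x * (x - 1)) : (1 + √(1 + 4 * β)) / 2 ≤ x := by
  have : √(1 + 4 * β) ≤ 2 * x - 1 := Real.sqrt_le_iff.2 ⟨by linarith, by nlinarith⟩
  linarith

section CStarAlgebra

variable {A : Type*} [CStarAlgebra A] [PartialOrder A] [StarOrderedRing A]

theorem algebraMap_inv_le_ringInverse {a : A} {c d : ℝ} (hc : 0 < c)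
    (hca : algebraMap ℝ A c ≤ a) (had : a ≤ algebraMap ℝ A d) :
    algebraMap ℝ A d⁻¹ ≤ Ring.inverse a := by
  rw [← ringInverse_algebraMap]
  exact CStarAlgebra.ringInverse_le_ringInverse had ((isStrictlyPositive_algebraMap hc).of_le hca)

theorem ringInverse_le_algebraMap_inv {a : A} {c : ℝ} (hc : 0 < c)
    (hca : algebraMap ℝ A c ≤ a) : Ring.inverse a ≤ algebraMap ℝ A c⁻¹ := by
  rw [← ringInverse_algebraMap]
  exact CStarAlgebra.ringInverse_le_ringInverse hca (isStrictlyPositive_algebraMap hc)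

end CStarAlgebra

namespace ContinuousLinearMap

theorem re_inner_le_re_inner_of_le {𝕜 E : Type*} [RCLike 𝕜] [NormedAddCommGroup E]
    [InnerProductSpace 𝕜 E] {S T : E →L[𝕜] E} (h : S ≤ T) (x : E) :
    RCLike.re ⟪S x, x⟫_𝕜 ≤ RCLike.re ⟪T x, x⟫_𝕜 := by
  simpa [inner_sub_left] using ((le_def S T).1 h).re_inner_nonneg_left x

variable {H : Type*} [NormedAddCommGroup H] [InnerProductSpace ℂ H]

theorem inner_algebraMap_apply_right (c : ℝ) (x : H) :
    ⟪x, algebraMap ℝ (H →L[ℂ] H) c x⟫_ℂ = ((c * ‖x‖ ^ 2 : ℝ) : ℂ) := by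
  simp [Algebra.algebraMap_eq_smul_one]

theorem re_inner_algebraMap_apply_left (c : ℝ) (x : H) :
    (⟪algebraMap ℝ (H →L[ℂ] H) c x, x⟫_ℂ).re = c * ‖x‖ ^ 2 := by
  simp [Algebra.algebraMap_eq_smul_one, ← Complex.ofReal_pow]

variable [CompleteSpace H]

theorem le_of_inner_le_inner {S T : H →L[ℂ] H} (hS : IsSelfAdjoint S) (hT : IsSelfAdjoint T)
    (h : ∀ x, ⟪x, S x⟫_ℂ ≤ ⟪x, T x⟫_ℂ) : S ≤ T := by
  rw [le_def, isPositive_iff']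
  refine ⟨hT.sub hS, fun x => ?_⟩
  have hsymm : ⟪(T - S) x, x⟫_ℂ = ⟪x, (T - S) x⟫_ℂ := (hT.sub hS).isSymmetric x x
  rw [hsymm, sub_apply, inner_sub_right, sub_nonneg]
  exact h x

theorem re_inner_ringInverse_apply_mem_Icc {T : H →L[ℂ] H} {c d : ℝ} (hc : 0 < c)
    (hcT : algebraMap ℝ _ c ≤ T) (hTd : T ≤ algebraMap ℝ _ d) (x : H) :
    (⟪Ring.inverse T x, x⟫_ℂ).re ∈ Set.Icc (d⁻¹ * ‖x‖ ^ 2) (c⁻¹ * ‖x‖ ^ 2) := by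
  constructor
  · simpa only [re_inner_algebraMap_apply_left, RCLike.re_to_complex] using
      re_inner_le_re_inner_of_le (algebraMap_inv_le_ringInverse hc hcT hTd) x
  · simpa only [re_inner_algebraMap_apply_left, RCLike.re_to_complex] using
      re_inner_le_re_inner_of_le (ringInverse_le_algebraMap_inv hc hcT) x

end ContinuousLinearMap

open scoped ComplexOrder in
theorem stmt17_general {H : Type*} [NormedAddCommGroup H] [InnerProductSpace ℂ H]
    [CompleteSpace H] (κ : ℝ) (hκ1 : κ < 1)
    (K : H →L[ℂ] H) (hK : IsSelfAdjoint K)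
    (hlow : ∀ x : H, 0 ≤ (inner ℂ x (K x) : ℂ))
    (hup : ∀ x : H, (inner ℂ x (K x) : ℂ) ≤ ((κ * ‖x‖ ^ 2 : ℝ) : ℂ))
    (b : H) (lam : ℝ) (hlam : 1 < lam)
    (heq : (lam : ℂ) - 1
        = (inner ℂ b ((Ring.inverse ((lam : ℂ) • (1 : H →L[ℂ] H) - K)) b) : ℂ)) :
    (1 + Real.sqrt (1 + 4 * ‖b‖ ^ 2)) / 2 ≤ lam ∧
      (lam - 1) * (lam - κ) ≤ ‖b‖ ^ 2 ∧
      lam - 1 ≤ ‖b‖ ^ 2 / (1 - κ) := by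
  have hT : (lam : ℂ) • (1 : H →L[ℂ] H) = algebraMap ℝ (H →L[ℂ] H) lam := by
    simp [Algebra.algebraMap_eq_smul_one]
  have hK0 : 0 ≤ K := ContinuousLinearMap.le_of_inner_le_inner (.zero _) hK (by simpa using hlow)
  have hKκ : K ≤ algebraMap ℝ _ κ := ContinuousLinearMap.le_of_inner_le_inner hK
    (.algebraMap _ (.all κ)) (by simpa [ContinuousLinearMap.inner_algebraMap_apply_right] using hup)
  have hlamκ : 0 < lam - κ := by linarith
  have hTκ : algebraMap ℝ _ (lam - κ) ≤ algebraMap ℝ (H →L[ℂ] H) lam - K := by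
    rw [map_sub]
    exact sub_le_sub_left hKκ _
  obtain ⟨hlo, hhi⟩ := ContinuousLinearMap.re_inner_ringInverse_apply_mem_Icc hlamκ hTκ
    (sub_le_self _ hK0) b
  have hre : (⟪Ring.inverse (algebraMap ℝ (H →L[ℂ] H) lam - K) b, b⟫_ℂ).re = lam - 1 := by
    rw [← RCLike.re_to_complex, inner_re_symm, RCLike.re_to_complex, ← hT, ← heq]
    simp
  rw [hre, inv_mul_le_iff₀ (by linarith)] at hlo
  rw [hre, le_inv_mul_iff₀ hlamκ, mul_comm] at hhi
  refine ⟨one_add_sqrt_one_add_four_mul_div_two_le (by linarith) hlo, hhi, ?_⟩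
  rw [le_div_iff₀ (by linarith)]
  calc (lam - 1) * (1 - κ) ≤ (lam - 1) * (lam - κ) := by gcongr
    _ ≤ ‖b‖ ^ 2 := hhi

open scoped ComplexOrder in
/-- A priori bounds for the Schur root: if `0 ≤ K ≤ κI` with `0 ≤ κ < 1`, `β = ‖b‖²`,
and `λ > 1` satisfies `λ − 1 = ⟨(λI−K)⁻¹b, b⟩`, then
`λ ≥ (1+√(1+4β))/2`, `(λ−1)(λ−κ) ≤ β`, and `λ − 1 ≤ β/(1−κ)`. -/
theorem stmt17 {H : Type*} [NormedAddCommGroup H] [InnerProductSpace ℂ H]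
    [CompleteSpace H] (κ : ℝ) (hκ0 : 0 ≤ κ) (hκ1 : κ < 1)
    (K : H →L[ℂ] H) (hK : IsSelfAdjoint K)
    (hlow : ∀ x : H, 0 ≤ (inner ℂ x (K x) : ℂ))
    (hup : ∀ x : H, (inner ℂ x (K x) : ℂ) ≤ ((κ * ‖x‖ ^ 2 : ℝ) : ℂ))
    (b : H) (lam : ℝ) (hlam : 1 < lam)
    (heq : (lam : ℂ) - 1
        = (inner ℂ b ((Ring.inverse ((lam : ℂ) • (1 : H →L[ℂ] H) - K)) b) : ℂ)) :
    (1 + Real.sqrt (1 + 4 * ‖b‖ ^ 2)) / 2 ≤ lam ∧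
      (lam - 1) * (lam - κ) ≤ ‖b‖ ^ 2 ∧
      lam - 1 ≤ ‖b‖ ^ 2 / (1 - κ) :=
  stmt17_general κ hκ1 K hK hlow hup b lam hlam heq
end
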